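/- arXiv:2012.12150 — 2 statements merged into one kernel-verified Lean document; each statement's English description precedes it below -/
import Mathlib

section
/- Fix k ∈ ℕ, k ≥ 1, and p ≥ 1. For J = 2^m define the restriction R_h e_k = Σ_{𝐣 ∈ {1,…,J}²} c_𝐣 Φ_𝐣, where c_𝐣 = (8/(3h²)) · λ_k^{−1} · (1/h²) ∫_{D_𝐣} e_k(y) dy. Then ‖e_k − R_h e_k‖_{L^p((−L,L)²)} → 0 as m → ∞. -/
noncomputable section

open Set

/-- Mesh size `h = 2L/J`. -/
def meshH (L : ℝ) (J : ℕ) : ℝ := 2 * L / J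

/-- Grid node `x_i = −L + i·h`. -/
def nodeX (L : ℝ) (J : ℕ) (i : ℕ) : ℝ := -L + i * meshH L J

/-- The one-dimensional piecewise constant basis functions `φ_i`, `i = 1, …, J`:
`φ_1 = (3/2)·1_{[x_0,x_1]} − (1/2)·1_{(x_1,x_2]}`,
`φ_i = −(1/2)·1_{(x_{i−2},x_{i−1}]} + 1_{(x_{i−1},x_i]} − (1/2)·1_{(x_i,x_{i+1}]}`
for `2 ≤ i ≤ J−1`, and
`φ_J = −(1/2)·1_{(x_{J−2},x_{J−1}]} + (3/2)·1_{(x_{J−1},x_J]}` (zero outside). -/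
def phiF (L : ℝ) (J : ℕ) (i : ℕ) : ℝ → ℝ := fun x =>
  if i = 1 then
    (if x ∈ Icc (nodeX L J 0) (nodeX L J 1) then (3 : ℝ) / 2 else 0)
      + (if x ∈ Ioc (nodeX L J 1) (nodeX L J 2) then -(1 : ℝ) / 2 else 0)
  else if i = J then
    (if x ∈ Ioc (nodeX L J (J - 2)) (nodeX L J (J - 1)) then -(1 : ℝ) / 2 else 0)
      + (if x ∈ Ioc (nodeX L J (J - 1)) (nodeX L J J) then (3 : ℝ) / 2 else 0)
  else
    (if x ∈ Ioc (nodeX L J (i - 2)) (nodeX L J (i - 1)) then -(1 : ℝ) / 2 else 0)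
      + (if x ∈ Ioc (nodeX L J (i - 1)) (nodeX L J i) then (1 : ℝ) else 0)
      + (if x ∈ Ioc (nodeX L J i) (nodeX L J (i + 1)) then -(1 : ℝ) / 2 else 0)

/-- The one-dimensional piecewise quadratic functions `ψ_i = (−Δ)⁻¹ φ_i`,
extended by `0` outside their support. -/
def psiF (L : ℝ) (J : ℕ) (i : ℕ) : ℝ → ℝ := fun x =>
  if i = 1 then
    (if x ∈ Icc (nodeX L J 0) (nodeX L J 1) then
        -(3 : ℝ) / 4 * (x - nodeX L J 0) ^ 2 + meshH L J * (x - nodeX L J 0) else 0)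
      + (if x ∈ Ioc (nodeX L J 1) (nodeX L J 2) then
        (1 : ℝ) / 4 * (x - nodeX L J 1) ^ 2 - meshH L J / 2 * (x - nodeX L J 1)
          + (meshH L J) ^ 2 / 4 else 0)
  else if i = J then
    (if x ∈ Ioc (nodeX L J (J - 2)) (nodeX L J (J - 1)) then
        (1 : ℝ) / 4 * (nodeX L J (J - 1) - x) ^ 2 - meshH L J / 2 * (nodeX L J (J - 1) - x)
          + (meshH L J) ^ 2 / 4 else 0)
      + (if x ∈ Ioc (nodeX L J (J - 1)) (nodeX L J J) then
        -(3 : ℝ) / 4 * (nodeX L J J - x) ^ 2 + meshH L J * (nodeX L J J - x) else 0)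
  else
    (if x ∈ Ioc (nodeX L J (i - 2)) (nodeX L J (i - 1)) then
        (1 : ℝ) / 4 * (x - nodeX L J (i - 2)) ^ 2 else 0)
      + (if x ∈ Ioc (nodeX L J (i - 1)) (nodeX L J i) then
        -(1 : ℝ) / 2 * (x - nodeX L J (i - 1) - meshH L J / 2) ^ 2
          + 3 * (meshH L J) ^ 2 / 8 else 0)
      + (if x ∈ Ioc (nodeX L J i) (nodeX L J (i + 1)) then
        (1 : ℝ) / 4 * (nodeX L J (i + 1) - x) ^ 2 else 0)

open MeasureTheory

/-- The two-dimensional basis function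
`Φ_{(j_1,j_2)}(x_1,x_2) = (3/(2h²))[φ_{j_1}(x_1)ψ_{j_2}(x_2) + ψ_{j_1}(x_1)φ_{j_2}(x_2)]`. -/
def Phi2 (L : ℝ) (J : ℕ) (j : ℕ × ℕ) : ℝ × ℝ → ℝ := fun x =>
  3 / (2 * (meshH L J) ^ 2) *
    (phiF L J j.1 x.1 * psiF L J j.2 x.2 + psiF L J j.1 x.1 * phiF L J j.2 x.2)

/-- The cell `D_{(i_1,i_2)} = (x_{i_1−1}, x_{i_1}] × (x_{i_2−1}, x_{i_2}]`. -/
def cell2 (L : ℝ) (J : ℕ) (i : ℕ × ℕ) : Set (ℝ × ℝ) :=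
  Ioc (nodeX L J (i.1 - 1)) (nodeX L J i.1) ×ˢ Ioc (nodeX L J (i.2 - 1)) (nodeX L J i.2)

/-- The open square `(−L,L)²`. -/
def sq2 (L : ℝ) : Set (ℝ × ℝ) := Ioo (-L) L ×ˢ Ioo (-L) L

/-- The Dirichlet eigenfunction `e_k(x_1,x_2) = sin(πk(x_1+L)/L)·sin(πk(x_2+L)/L)`. -/
def eK (L : ℝ) (k : ℕ) : ℝ × ℝ → ℝ := fun x =>
  Real.sin (Real.pi * k * (x.1 + L) / L) * Real.sin (Real.pi * k * (x.2 + L) / L)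

/-- The corresponding eigenvalue `λ_k = 2(πk/L)²`. -/
def lamK (L : ℝ) (k : ℕ) : ℝ := 2 * (Real.pi * k / L) ^ 2

/-- Coefficients `c_𝐣 = (8/(3h²))·λ_k⁻¹·(1/h²)∫_{D_𝐣} e_k` of the restriction `R_h e_k`. -/
def coefC (L : ℝ) (J : ℕ) (k : ℕ) (j : ℕ × ℕ) : ℝ :=
  8 / (3 * (meshH L J) ^ 2) * (lamK L k)⁻¹ * ((meshH L J) ^ 2)⁻¹ *
    ∫ y in cell2 L J j, eK L k y

/-- The restriction `R_h e_k = Σ_𝐣 c_𝐣 Φ_𝐣`. -/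
def RhEk (L : ℝ) (J : ℕ) (k : ℕ) : ℝ × ℝ → ℝ := fun x =>
  ∑ j ∈ Finset.Icc 1 J ×ˢ Finset.Icc 1 J, coefC L J k j * Phi2 L J j x

/-- The cellwise averaging operator `R̄_h` on the partition of `(−L,L)²` into the
cells `D_𝐢`. -/
def Rbar2 (L : ℝ) (J : ℕ) (v : ℝ × ℝ → ℝ) : ℝ × ℝ → ℝ := fun x =>
  ∑ i ∈ Finset.Icc 1 J ×ˢ Finset.Icc 1 J,
    Set.indicator (cell2 L J i)
      (fun _ => ((meshH L J) ^ 2)⁻¹ * ∫ y in cell2 L J i, v y) x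

namespace Stmt13Aux

/-- frequency `ω = πk/L`. -/
def om (L : ℝ) (k : ℕ) : ℝ := Real.pi * k / L

/-- 1-D eigenfunction `s(t) = sin(ω(t+L))`. -/
def sf (L : ℝ) (k : ℕ) : ℝ → ℝ := fun t => Real.sin (om L k * (t + L))

/-- Integral of `sf` over the `i`-th cell `(x_i − h, x_i]`, defined for all `i : ℕ`
(including the ghost cells `0` and `J+1`). -/
def AI (L : ℝ) (J k : ℕ) (i : ℕ) : ℝ :=
  ∫ t in (nodeX L J i - meshH L J)..(nodeX L J i), sf L k t

variable {L : ℝ} {J k : ℕ}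

lemma meshH_pos (hL : 0 < L) (hJ : 0 < J) : 0 < meshH L J := by
  have h : (0:ℝ) < J := by exact_mod_cast hJ
  unfold meshH; positivity

lemma om_pos (hL : 0 < L) (hk : 1 ≤ k) : 0 < om L k := by
  have h : (0:ℝ) < k := by exact_mod_cast hk
  unfold om; positivity

lemma nodeX_add_one (i : ℕ) : nodeX L J (i+1) = nodeX L J i + meshH L J := by
  unfold nodeX; push_cast; ring

lemma nodeX_sub_one {i : ℕ} (hi : 1 ≤ i) : nodeX L J (i-1) = nodeX L J i - meshH L J := by
  obtain ⟨j, rfl⟩ := Nat.exists_eq_add_of_le hi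
  rw [show 1 + j = j + 1 by omega, nodeX_add_one]
  simp

lemma nodeX_mono (hh : 0 ≤ meshH L J) {i j : ℕ} (hij : i ≤ j) :
    nodeX L J i ≤ nodeX L J j := by
  unfold nodeX
  have h : (i:ℝ) ≤ j := by exact_mod_cast hij
  nlinarith

lemma nodeX_zero : nodeX L J 0 = -L := by simp [nodeX]

lemma nodeX_J (hJ : 0 < J) : nodeX L J J = L := by
  have h : (J:ℝ) ≠ 0 := by exact_mod_cast hJ.ne'
  unfold nodeX meshH
  field_simp
  ring

lemma sf_cont : Continuous (sf L k) := by unfold sf; fun_prop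

lemma sf_abs_le (t : ℝ) : |sf L k t| ≤ 1 := Real.abs_sin_le_one _

lemma sf_lip (hom : 0 ≤ om L k) (t u : ℝ) : |sf L k t - sf L k u| ≤ om L k * |t - u| := by
  unfold sf
  rw [Real.sin_sub_sin, abs_mul, abs_mul]
  have h1 : |Real.sin ((om L k * (t + L) - om L k * (u + L)) / 2)|
      ≤ |(om L k * (t + L) - om L k * (u + L)) / 2| := Real.abs_sin_le_abs
  have h2 : |Real.cos ((om L k * (t + L) + om L k * (u + L)) / 2)| ≤ 1 :=
    Real.abs_cos_le_one _
  have h3 : |(om L k * (t + L) - om L k * (u + L)) / 2| = om L k * |t - u| / 2 := by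
    rw [show (om L k * (t + L) - om L k * (u + L)) / 2 = (om L k * (t - u)) / 2 by ring,
      abs_div, abs_mul, abs_of_nonneg hom]
    norm_num
  have h4 : (0:ℝ) ≤ |Real.sin ((om L k * (t + L) - om L k * (u + L)) / 2)| := abs_nonneg _
  have h5 : (0:ℝ) ≤ |Real.cos ((om L k * (t + L) + om L k * (u + L)) / 2)| := abs_nonneg _
  have h6 : |Real.sin ((om L k * (t + L) - om L k * (u + L)) / 2)|
      ≤ om L k * |t - u| / 2 := h3 ▸ h1
  have h7 : (0:ℝ) ≤ om L k * |t - u| / 2 := le_trans h4 h6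
  rw [abs_two]
  nlinarith [mul_le_mul h6 h2 h5 h7]

lemma abs_AI_le (hh : 0 ≤ meshH L J) (i : ℕ) : |AI L J k i| ≤ meshH L J := by
  have := intervalIntegral.norm_integral_le_of_norm_le_const
    (a := nodeX L J i - meshH L J) (b := nodeX L J i) (C := 1) (f := sf L k)
    (fun x _ => by simpa using sf_abs_le (L := L) (k := k) x)
  simpa [AI, Real.norm_eq_abs, abs_of_nonneg hh] using this

lemma AI_approx (hh : 0 ≤ meshH L J) (hom : 0 ≤ om L k) (i : ℕ) {x : ℝ}
    (hx : x ∈ Set.Icc (nodeX L J i - meshH L J) (nodeX L J i)) :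
    |AI L J k i - meshH L J * sf L k x| ≤ om L k * meshH L J ^ 2 := by
  have hint : ∀ a b : ℝ, IntervalIntegrable (sf L k) MeasureTheory.volume a b :=
    fun a b => sf_cont.intervalIntegrable a b
  have hconst : meshH L J * sf L k x
      = ∫ _t in (nodeX L J i - meshH L J)..(nodeX L J i), sf L k x := by
    rw [intervalIntegral.integral_const, smul_eq_mul]
    ring
  rw [AI, hconst, ← intervalIntegral.integral_sub (hint _ _)
    (intervalIntegrable_const)]
  have hb := intervalIntegral.norm_integral_le_of_norm_le_const
    (a := nodeX L J i - meshH L J) (b := nodeX L J i) (C := om L k * meshH L J)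
    (f := fun t => sf L k t - sf L k x) ?_
  · have habs : |nodeX L J i - (nodeX L J i - meshH L J)| = meshH L J := by
      rw [show nodeX L J i - (nodeX L J i - meshH L J) = meshH L J by ring,
        abs_of_nonneg hh]
    rw [Real.norm_eq_abs] at hb
    rw [habs] at hb
    calc _ ≤ om L k * meshH L J * meshH L J := hb
      _ = om L k * meshH L J ^ 2 := by ring
  · intro t ht
    rw [Set.uIoc_of_le (by linarith)] at ht
    rw [Real.norm_eq_abs]
    have h1 := sf_lip (L := L) (k := k) hom t x
    have h2 : |t - x| ≤ meshH L J := by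
      rw [abs_le]
      constructor <;> [skip; skip] <;>
        · obtain ⟨ht1, ht2⟩ := ht; obtain ⟨hx1, hx2⟩ := hx; linarith
    calc |sf L k t - sf L k x| ≤ om L k * |t - x| := h1
      _ ≤ om L k * meshH L J := by nlinarith


lemma AI_succ (i : ℕ) :
    AI L J k (i+1) = ∫ t in (nodeX L J i - meshH L J)..(nodeX L J i), sf L k (t + meshH L J) := by
  rw [AI, intervalIntegral.integral_comp_add_right, nodeX_add_one]
  congr 1
  ring

lemma AI_pred {i : ℕ} (hi : 1 ≤ i) :
    AI L J k (i-1) = ∫ t in (nodeX L J i - meshH L J)..(nodeX L J i), sf L k (t - meshH L J) := by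
  rw [AI, intervalIntegral.integral_comp_sub_right, nodeX_sub_one hi]

lemma AI_pred_add_succ {i : ℕ} (hi : 1 ≤ i) :
    AI L J k (i-1) + AI L J k (i+1)
      = 2 * Real.cos (om L k * meshH L J) * AI L J k i := by
  have hint : ∀ g : ℝ → ℝ, Continuous g →
      IntervalIntegrable g MeasureTheory.volume (nodeX L J i - meshH L J) (nodeX L J i) :=
    fun g hg => hg.intervalIntegrable _ _
  rw [AI_pred hi, AI_succ, ← intervalIntegral.integral_add
    (hint _ (by unfold sf; fun_prop)) (hint _ (by unfold sf; fun_prop))]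
  rw [AI, ← intervalIntegral.integral_const_mul]
  apply intervalIntegral.integral_congr
  intro t _
  show sf L k (t - meshH L J) + sf L k (t + meshH L J) = _
  unfold sf
  rw [show om L k * (t - meshH L J + L) = om L k * (t + L) - om L k * meshH L J by ring,
    show om L k * (t + meshH L J + L) = om L k * (t + L) + om L k * meshH L J by ring,
    Real.sin_sub, Real.sin_add]
  ring

lemma AI_zero : AI L J k 0 = - AI L J k 1 := by
  have h0 : nodeX L J 0 = -L := nodeX_zero
  have h1 : nodeX L J 1 = -L + meshH L J := by
    rw [show (1:ℕ) = 0 + 1 by rfl, nodeX_add_one, h0]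
  have key : AI L J k 0 = ∫ t in (-L)..(-L + meshH L J), sf L k (-(2*L) - t) := by
    rw [intervalIntegral.integral_comp_sub_left (f := sf L k) (d := -(2*L))]
    rw [AI, h0]
    congr 1 <;> ring
  rw [key, AI, h1]
  have heq : ∀ t : ℝ, sf L k (-(2*L) - t) = - sf L k t := by
    intro t
    unfold sf
    rw [show om L k * (-(2*L) - t + L) = -(om L k * (t + L)) by ring, Real.sin_neg]
  rw [intervalIntegral.integral_congr (g := fun t => - sf L k t) (fun t _ => heq t),
    intervalIntegral.integral_neg]
  congr 1
  ring_nf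

lemma AI_top (hL : 0 < L) (hJ : 0 < J) : AI L J k (J+1) = - AI L J k J := by
  have hJL : nodeX L J J = L := nodeX_J hJ
  have hJ1 : nodeX L J (J+1) = L + meshH L J := by rw [nodeX_add_one, hJL]
  have key : AI L J k (J+1) = ∫ t in (L - meshH L J)..L, sf L k (2*L - t) := by
    rw [intervalIntegral.integral_comp_sub_left (f := sf L k) (d := 2*L)]
    rw [AI, hJ1]
    congr 1 <;> ring
  rw [key, AI, hJL]
  have heq : ∀ t : ℝ, sf L k (2*L - t) = - sf L k t := by
    intro t
    unfold sf
    have hL' : (L:ℝ) ≠ 0 := hL.ne'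
    have harg : om L k * (2*L - t + L) = -(om L k * (t + L)) + ((2*k : ℤ) : ℝ) * (2*Real.pi) := by
      unfold om
      push_cast
      field_simp
      ring
    rw [harg, Real.sin_add_int_mul_two_pi, Real.sin_neg]
  rw [intervalIntegral.integral_congr (g := fun t => - sf L k t) (fun t _ => heq t),
    intervalIntegral.integral_neg]


lemma nm_left (hh : 0 ≤ meshH L J) {i a b : ℕ} {x : ℝ}
    (hxl : nodeX L J (i-1) < x) (hb : b ≤ i - 1) :
    x ∉ Set.Ioc (nodeX L J a) (nodeX L J b) := by
  rintro ⟨_, h2⟩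
  have := nodeX_mono (L := L) hh hb
  linarith

lemma nm_right (hh : 0 ≤ meshH L J) {i a b : ℕ} {x : ℝ}
    (hxu : x ≤ nodeX L J i) (ha : i ≤ a) :
    x ∉ Set.Ioc (nodeX L J a) (nodeX L J b) := by
  rintro ⟨h1, _⟩
  have := nodeX_mono (L := L) hh ha
  linarith

lemma nm_icc (hh : 0 ≤ meshH L J) {i : ℕ} {x : ℝ}
    (hxl : nodeX L J (i-1) < x) (h1 : 1 ≤ i - 1) :
    x ∉ Set.Icc (nodeX L J 0) (nodeX L J 1) := by
  rintro ⟨_, h2⟩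
  have := nodeX_mono (L := L) hh h1
  linarith

lemma phi_zero (hh : 0 ≤ meshH L J) {i j : ℕ} (hi1 : 1 ≤ i) (hiJ : i ≤ J)
    (hjJ : j ≤ J) (hfar : j + 1 < i ∨ i + 1 < j) {x : ℝ}
    (hxl : nodeX L J (i-1) < x) (hxu : x ≤ nodeX L J i) : phiF L J j x = 0 := by
  unfold phiF
  rcases eq_or_ne j 1 with rfl | hj1
  · have hi3 : 3 ≤ i := by omega
    rw [if_pos rfl, if_neg (nm_icc hh hxl (by omega)),
      if_neg (nm_left hh hxl (by omega))]
    norm_num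
  · rw [if_neg hj1]
    rcases eq_or_ne j J with rfl | hjJ'
    · rw [if_pos rfl, if_neg (nm_right hh hxu (by omega)),
        if_neg (nm_right hh hxu (by omega))]
      norm_num
    · rw [if_neg hjJ']
      rcases hfar with hfar | hfar
      · rw [if_neg (nm_left hh hxl (by omega)), if_neg (nm_left hh hxl (by omega)),
          if_neg (nm_left hh hxl (by omega))]
        norm_num
      · rw [if_neg (nm_right hh hxu (by omega)), if_neg (nm_right hh hxu (by omega)),
          if_neg (nm_right hh hxu (by omega))]
        norm_num

lemma psi_zero (hh : 0 ≤ meshH L J) {i j : ℕ} (hi1 : 1 ≤ i) (hiJ : i ≤ J)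
    (hjJ : j ≤ J) (hfar : j + 1 < i ∨ i + 1 < j) {x : ℝ}
    (hxl : nodeX L J (i-1) < x) (hxu : x ≤ nodeX L J i) : psiF L J j x = 0 := by
  unfold psiF
  rcases eq_or_ne j 1 with rfl | hj1
  · have hi3 : 3 ≤ i := by omega
    rw [if_pos rfl, if_neg (nm_icc hh hxl (by omega)),
      if_neg (nm_left hh hxl (by omega))]
    norm_num
  · rw [if_neg hj1]
    rcases eq_or_ne j J with rfl | hjJ'
    · rw [if_pos rfl, if_neg (nm_right hh hxu (by omega)),
        if_neg (nm_right hh hxu (by omega))]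
      norm_num
    · rw [if_neg hjJ']
      rcases hfar with hfar | hfar
      · rw [if_neg (nm_left hh hxl (by omega)), if_neg (nm_left hh hxl (by omega)),
          if_neg (nm_left hh hxl (by omega))]
        norm_num
      · rw [if_neg (nm_right hh hxu (by omega)), if_neg (nm_right hh hxu (by omega)),
          if_neg (nm_right hh hxu (by omega))]
        norm_num

lemma sum_phi (hL : 0 < L) (hh : 0 < meshH L J) (hJ : 4 ≤ J) {i : ℕ}
    (hi1 : 1 ≤ i) (hiJ : i ≤ J) {x : ℝ}
    (hxl : nodeX L J (i-1) < x) (hxu : x ≤ nodeX L J i) :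
    ∑ j ∈ Finset.Icc 1 J, AI L J k j * phiF L J j x
      = -(AI L J k (i-1)) / 2 + AI L J k i - AI L J k (i+1) / 2 := by
  have hh' := hh.le
  rcases eq_or_ne i 1 with rfl | hi1'
  · have h0 : (1:ℕ) - 1 = 0 := rfl
    rw [h0] at hxl
    have hstep : ∑ j ∈ Finset.Icc 1 J, AI L J k j * phiF L J j x
        = ∑ j ∈ ({1, 2} : Finset ℕ), AI L J k j * phiF L J j x := by
      refine (Finset.sum_subset ?_ ?_).symm
      · intro j hj
        simp only [Finset.mem_insert, Finset.mem_singleton] at hj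
        simp only [Finset.mem_Icc]
        omega
      · intro j hj hj2
        simp only [Finset.mem_Icc] at hj
        simp only [Finset.mem_insert, Finset.mem_singleton] at hj2
        rw [phi_zero hh' (le_refl 1) (by omega) hj.2 (by omega) (h0 ▸ hxl) hxu, mul_zero]
    rw [hstep, Finset.sum_insert (by norm_num), Finset.sum_singleton]
    have hmIcc : x ∈ Set.Icc (nodeX L J 0) (nodeX L J 1) := ⟨hxl.le, hxu⟩
    have hm01 : x ∈ Set.Ioc (nodeX L J 0) (nodeX L J 1) := ⟨hxl, hxu⟩
    have n12 : x ∉ Set.Ioc (nodeX L J 1) (nodeX L J 2) :=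
      fun hm => absurd hm.1 (not_lt.2 hxu)
    have n23 : x ∉ Set.Ioc (nodeX L J 2) (nodeX L J 3) :=
      fun hm => absurd hm.1 (not_lt.2 (hxu.trans (nodeX_mono hh' (by omega))))
    have e1 : phiF L J 1 x = 3/2 := by
      unfold phiF
      rw [if_pos rfl, if_pos hmIcc, if_neg n12]
      norm_num
    have e2 : phiF L J 2 x = -(1/2) := by
      unfold phiF
      have i0 : (2:ℕ) - 2 = 0 := rfl
      have i1 : (2:ℕ) - 1 = 1 := rfl
      rw [if_neg (by norm_num), if_neg (show (2:ℕ) ≠ J by omega), i0, i1,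
        if_pos hm01, if_neg n12, if_neg n23]
      norm_num
    rw [e1, e2, h0, AI_zero]
    ring
  · rcases eq_or_ne J i with rfl | hiJ''
    · have hstep : ∑ j ∈ Finset.Icc 1 J, AI L J k j * phiF L J j x
          = ∑ j ∈ ({J - 1, J} : Finset ℕ), AI L J k j * phiF L J j x := by
        refine (Finset.sum_subset ?_ ?_).symm
        · intro j hj
          simp only [Finset.mem_insert, Finset.mem_singleton] at hj
          simp only [Finset.mem_Icc]
          omega
        · intro j hj hj2
          simp only [Finset.mem_Icc] at hj
          simp only [Finset.mem_insert, Finset.mem_singleton] at hj2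
          rw [phi_zero hh' hi1 (le_refl J) hj.2 (by omega) hxl hxu, mul_zero]
      rw [hstep, Finset.sum_insert (by simp only [Finset.mem_insert, Finset.mem_singleton]; omega), Finset.sum_singleton]
      have hmem : x ∈ Set.Ioc (nodeX L J (J-1)) (nodeX L J J) := ⟨hxl, hxu⟩
      have n2 : x ∉ Set.Ioc (nodeX L J (J-2)) (nodeX L J (J-1)) :=
        fun hm => absurd hm.2 (not_le.2 hxl)
      have e1 : phiF L J (J-1) x = -(1/2) := by
        unfold phiF
        have i4 : J - 1 - 1 = J - 2 := by omega
        have i5 : J - 1 + 1 = J := by omega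
        have n1 : x ∉ Set.Ioc (nodeX L J (J-1-2)) (nodeX L J (J-2)) :=
          fun hm => absurd hm.2
            (not_le.2 ((nodeX_mono hh' (show J-2 ≤ J-1 by omega)).trans_lt hxl))
        rw [if_neg (show J - 1 ≠ 1 by omega), if_neg (show J - 1 ≠ J by omega),
          i4, i5, if_neg n1, if_neg n2, if_pos hmem]
        norm_num
      have e2 : phiF L J J x = 3/2 := by
        unfold phiF
        rw [if_neg (show J ≠ 1 by omega), if_pos rfl, if_neg n2, if_pos hmem]
        norm_num
      rw [e1, e2, AI_top hL (by omega)]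
      ring
    · have hiJ' : i ≠ J := fun h => hiJ'' h.symm
      have hi2 : 2 ≤ i := by omega
      have hstep : ∑ j ∈ Finset.Icc 1 J, AI L J k j * phiF L J j x
          = ∑ j ∈ ({i - 1, i, i + 1} : Finset ℕ), AI L J k j * phiF L J j x := by
        refine (Finset.sum_subset ?_ ?_).symm
        · intro j hj
          simp only [Finset.mem_insert, Finset.mem_singleton] at hj
          simp only [Finset.mem_Icc]
          omega
        · intro j hj hj2
          simp only [Finset.mem_Icc] at hj
          simp only [Finset.mem_insert, Finset.mem_singleton] at hj2
          rw [phi_zero hh' hi1 hiJ hj.2 (by omega) hxl hxu, mul_zero]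
      rw [hstep, Finset.sum_insert (by simp only [Finset.mem_insert, Finset.mem_singleton]; omega),
        Finset.sum_insert (by simp only [Finset.mem_insert, Finset.mem_singleton]; omega), Finset.sum_singleton]
      have hmem : x ∈ Set.Ioc (nodeX L J (i-1)) (nodeX L J i) := ⟨hxl, hxu⟩
      have n2 : x ∉ Set.Ioc (nodeX L J (i-2)) (nodeX L J (i-1)) :=
        fun hm => absurd hm.2 (not_le.2 hxl)
      have n3 : x ∉ Set.Ioc (nodeX L J i) (nodeX L J (i+1)) :=
        fun hm => absurd hm.1 (not_lt.2 hxu)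
      have eLft : phiF L J (i-1) x = -(1/2) := by
        unfold phiF
        rcases eq_or_ne i 2 with rfl | hi2'
        · have i21 : (2:ℕ) - 1 = 1 := rfl
          rw [i21] at hxl hmem
          have nIcc : x ∉ Set.Icc (nodeX L J 0) (nodeX L J 1) :=
            fun hm => absurd hm.2 (not_le.2 hxl)
          rw [i21, if_pos rfl, if_neg nIcc, if_pos hmem]
          norm_num
        · have i4 : i - 1 - 1 = i - 2 := by omega
          have i5 : i - 1 + 1 = i := by omega
          have n1 : x ∉ Set.Ioc (nodeX L J (i-1-2)) (nodeX L J (i-2)) :=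
            fun hm => absurd hm.2
              (not_le.2 ((nodeX_mono hh' (show i-2 ≤ i-1 by omega)).trans_lt hxl))
          rw [if_neg (show i - 1 ≠ 1 by omega), if_neg (show i - 1 ≠ J by omega),
            i4, i5, if_neg n1, if_neg n2, if_pos hmem]
          norm_num
      have eMid : phiF L J i x = 1 := by
        unfold phiF
        rw [if_neg hi1', if_neg hiJ', if_neg n2, if_pos hmem, if_neg n3]
        norm_num
      have eRgt : phiF L J (i+1) x = -(1/2) := by
        unfold phiF
        rcases eq_or_ne (i+1) J with hJ' | hiJ2
        · rw [if_neg (by omega), if_pos hJ',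
            show J - 2 = i - 1 by omega, show J - 1 = i by omega,
            if_pos hmem, if_neg (fun hm => absurd hm.1 (not_lt.2 hxu))]
          norm_num
        · have n4 : x ∉ Set.Ioc (nodeX L J (i+1)) (nodeX L J (i+2)) :=
            fun hm => absurd hm.1 (not_lt.2 (hxu.trans (nodeX_mono hh' (by omega))))
          rw [if_neg (by omega), if_neg hiJ2,
            show i + 1 - 2 = i - 1 by omega, show i + 1 - 1 = i by omega,
            if_pos hmem, if_neg n3, if_neg n4]
          norm_num
      rw [eLft, eMid, eRgt]
      ring

lemma sum_psi (hL : 0 < L) (hh : 0 < meshH L J) (hJ : 4 ≤ J) {i : ℕ}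
    (hi1 : 1 ≤ i) (hiJ : i ≤ J) {x : ℝ}
    (hxl : nodeX L J (i-1) < x) (hxu : x ≤ nodeX L J i) :
    ∑ j ∈ Finset.Icc 1 J, AI L J k j * psiF L J j x
      = 1/4 * AI L J k (i-1) * (nodeX L J i - x)^2
        + AI L J k i * (-(1/2) * (x - nodeX L J (i-1) - meshH L J / 2)^2
            + 3 * meshH L J ^2 / 8)
        + 1/4 * AI L J k (i+1) * (x - nodeX L J (i-1))^2 := by
  have hh' := hh.le
  rcases eq_or_ne i 1 with rfl | hi1'
  · have h0 : (1:ℕ) - 1 = 0 := rfl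
    rw [h0] at hxl ⊢
    have hstep : ∑ j ∈ Finset.Icc 1 J, AI L J k j * psiF L J j x
        = ∑ j ∈ ({1, 2} : Finset ℕ), AI L J k j * psiF L J j x := by
      refine (Finset.sum_subset ?_ ?_).symm
      · intro j hj
        simp only [Finset.mem_insert, Finset.mem_singleton] at hj
        simp only [Finset.mem_Icc]
        omega
      · intro j hj hj2
        simp only [Finset.mem_Icc] at hj
        simp only [Finset.mem_insert, Finset.mem_singleton] at hj2
        rw [psi_zero hh' (le_refl 1) (by omega) hj.2 (by omega) (h0 ▸ hxl) hxu, mul_zero]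
    rw [hstep, Finset.sum_insert (by norm_num), Finset.sum_singleton]
    have hmIcc : x ∈ Set.Icc (nodeX L J 0) (nodeX L J 1) := ⟨hxl.le, hxu⟩
    have hm01 : x ∈ Set.Ioc (nodeX L J 0) (nodeX L J 1) := ⟨hxl, hxu⟩
    have n12 : x ∉ Set.Ioc (nodeX L J 1) (nodeX L J 2) :=
      fun hm => absurd hm.1 (not_lt.2 hxu)
    have n23 : x ∉ Set.Ioc (nodeX L J 2) (nodeX L J 3) :=
      fun hm => absurd hm.1 (not_lt.2 (hxu.trans (nodeX_mono hh' (by omega))))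
    have e1 : psiF L J 1 x
        = -(3:ℝ)/4 * (x - nodeX L J 0)^2 + meshH L J * (x - nodeX L J 0) := by
      unfold psiF
      rw [if_pos rfl, if_pos hmIcc, if_neg n12]
      ring
    have e2 : psiF L J 2 x = 1/4 * (x - nodeX L J 0)^2 := by
      unfold psiF
      have i0 : (2:ℕ) - 2 = 0 := rfl
      have i1 : (2:ℕ) - 1 = 1 := rfl
      rw [if_neg (by norm_num), if_neg (show (2:ℕ) ≠ J by omega), i0, i1,
        if_pos hm01, if_neg n12, if_neg n23]
      ring
    have n01 : nodeX L J 1 = nodeX L J 0 + meshH L J := by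
      rw [show (1:ℕ) = 0 + 1 from rfl, nodeX_add_one]
    rw [e1, e2, AI_zero, n01]
    ring
  · rcases eq_or_ne J i with rfl | hiJ''
    · have hstep : ∑ j ∈ Finset.Icc 1 J, AI L J k j * psiF L J j x
          = ∑ j ∈ ({J - 1, J} : Finset ℕ), AI L J k j * psiF L J j x := by
        refine (Finset.sum_subset ?_ ?_).symm
        · intro j hj
          simp only [Finset.mem_insert, Finset.mem_singleton] at hj
          simp only [Finset.mem_Icc]
          omega
        · intro j hj hj2
          simp only [Finset.mem_Icc] at hj
          simp only [Finset.mem_insert, Finset.mem_singleton] at hj2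
          rw [psi_zero hh' hi1 (le_refl J) hj.2 (by omega) hxl hxu, mul_zero]
      rw [hstep, Finset.sum_insert (by simp only [Finset.mem_insert, Finset.mem_singleton]; omega), Finset.sum_singleton]
      have hmem : x ∈ Set.Ioc (nodeX L J (J-1)) (nodeX L J J) := ⟨hxl, hxu⟩
      have n2 : x ∉ Set.Ioc (nodeX L J (J-2)) (nodeX L J (J-1)) :=
        fun hm => absurd hm.2 (not_le.2 hxl)
      have e1 : psiF L J (J-1) x = 1/4 * (nodeX L J J - x)^2 := by
        unfold psiF
        have i4 : J - 1 - 1 = J - 2 := by omega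
        have i5 : J - 1 + 1 = J := by omega
        have n1 : x ∉ Set.Ioc (nodeX L J (J-1-2)) (nodeX L J (J-2)) :=
          fun hm => absurd hm.2
            (not_le.2 ((nodeX_mono hh' (show J-2 ≤ J-1 by omega)).trans_lt hxl))
        rw [if_neg (show J - 1 ≠ 1 by omega), if_neg (show J - 1 ≠ J by omega),
          i4, i5, if_neg n1, if_neg n2, if_pos hmem]
        ring
      have e2 : psiF L J J x
          = -(3:ℝ)/4 * (nodeX L J J - x)^2 + meshH L J * (nodeX L J J - x) := by
        unfold psiF
        rw [if_neg (show J ≠ 1 by omega), if_pos rfl, if_neg n2, if_pos hmem]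
        ring
      have nJm : nodeX L J (J-1) = nodeX L J J - meshH L J := nodeX_sub_one (by omega)
      rw [e1, e2, AI_top hL (by omega), nJm]
      ring
    · have hiJ' : i ≠ J := fun h => hiJ'' h.symm
      have hi2 : 2 ≤ i := by omega
      have hstep : ∑ j ∈ Finset.Icc 1 J, AI L J k j * psiF L J j x
          = ∑ j ∈ ({i - 1, i, i + 1} : Finset ℕ), AI L J k j * psiF L J j x := by
        refine (Finset.sum_subset ?_ ?_).symm
        · intro j hj
          simp only [Finset.mem_insert, Finset.mem_singleton] at hj
          simp only [Finset.mem_Icc]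
          omega
        · intro j hj hj2
          simp only [Finset.mem_Icc] at hj
          simp only [Finset.mem_insert, Finset.mem_singleton] at hj2
          rw [psi_zero hh' hi1 hiJ hj.2 (by omega) hxl hxu, mul_zero]
      rw [hstep, Finset.sum_insert (by simp only [Finset.mem_insert, Finset.mem_singleton]; omega),
        Finset.sum_insert (by simp only [Finset.mem_insert, Finset.mem_singleton]; omega), Finset.sum_singleton]
      have hmem : x ∈ Set.Ioc (nodeX L J (i-1)) (nodeX L J i) := ⟨hxl, hxu⟩
      have n2 : x ∉ Set.Ioc (nodeX L J (i-2)) (nodeX L J (i-1)) :=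
        fun hm => absurd hm.2 (not_le.2 hxl)
      have n3 : x ∉ Set.Ioc (nodeX L J i) (nodeX L J (i+1)) :=
        fun hm => absurd hm.1 (not_lt.2 hxu)
      have hnodei : nodeX L J (i-1) = nodeX L J i - meshH L J := nodeX_sub_one (by omega)
      have eLft : psiF L J (i-1) x = 1/4 * (nodeX L J i - x)^2 := by
        unfold psiF
        rcases eq_or_ne i 2 with rfl | hi2'
        · have i21 : (2:ℕ) - 1 = 1 := rfl
          rw [i21] at hxl hmem hnodei
          have nIcc : x ∉ Set.Icc (nodeX L J 0) (nodeX L J 1) :=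
            fun hm => absurd hm.2 (not_le.2 hxl)
          rw [i21, if_pos rfl, if_neg nIcc, if_pos hmem, hnodei]
          ring
        · have i4 : i - 1 - 1 = i - 2 := by omega
          have i5 : i - 1 + 1 = i := by omega
          have n1 : x ∉ Set.Ioc (nodeX L J (i-1-2)) (nodeX L J (i-2)) :=
            fun hm => absurd hm.2
              (not_le.2 ((nodeX_mono hh' (show i-2 ≤ i-1 by omega)).trans_lt hxl))
          rw [if_neg (show i - 1 ≠ 1 by omega), if_neg (show i - 1 ≠ J by omega),
            i4, i5, if_neg n1, if_neg n2, if_pos hmem]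
          ring
      have eMid : psiF L J i x
          = -(1:ℝ)/2 * (x - nodeX L J (i-1) - meshH L J / 2)^2
              + 3 * meshH L J ^2 / 8 := by
        unfold psiF
        rw [if_neg hi1', if_neg hiJ', if_neg n2, if_pos hmem, if_neg n3]
        ring
      have eRgt : psiF L J (i+1) x = 1/4 * (x - nodeX L J (i-1))^2 := by
        unfold psiF
        rcases eq_or_ne (i+1) J with hJ' | hiJ2
        · rw [if_neg (by omega), if_pos hJ',
            show J - 2 = i - 1 by omega, show J - 1 = i by omega,
            if_pos hmem, if_neg (fun hm => absurd hm.1 (not_lt.2 hxu)), hnodei]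
          ring
        · have n4 : x ∉ Set.Ioc (nodeX L J (i+1)) (nodeX L J (i+2)) :=
            fun hm => absurd hm.1 (not_lt.2 (hxu.trans (nodeX_mono hh' (by omega))))
          rw [if_neg (by omega), if_neg hiJ2,
            show i + 1 - 2 = i - 1 by omega, show i + 1 - 1 = i by omega,
            if_pos hmem, if_neg n3, if_neg n4]
          ring
      rw [eLft, eMid, eRgt]
      ring

lemma AI_eq_setIntegral (hh : 0 ≤ meshH L J) {j : ℕ} (hj : 1 ≤ j) :
    ∫ y in Set.Ioc (nodeX L J (j-1)) (nodeX L J j), sf L k y = AI L J k j := by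
  rw [AI, intervalIntegral.integral_of_le (by linarith), nodeX_sub_one hj]

lemma coefC_eq (hL : 0 < L) (hh : 0 ≤ meshH L J) {j1 j2 : ℕ}
    (hj1 : 1 ≤ j1) (hj2 : 1 ≤ j2) :
    coefC L J k (j1, j2) = 8 / (3 * meshH L J ^ 2) * (lamK L k)⁻¹ * (meshH L J ^ 2)⁻¹
      * (AI L J k j1 * AI L J k j2) := by
  rw [coefC]
  congr 1
  have heq : ∀ y : ℝ × ℝ, eK L k y = sf L k y.1 * sf L k y.2 := by
    intro y
    unfold eK sf om
    congr 2 <;> ring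
  simp only [heq, cell2]
  rw [MeasureTheory.Measure.volume_eq_prod, MeasureTheory.setIntegral_prod_mul,
    AI_eq_setIntegral hh hj1, AI_eq_setIntegral hh hj2]

lemma double_sum_helper (P : Finset ℕ) (c : ℝ) (f g : ℕ → ℝ) :
    ∑ j1 ∈ P, ∑ j2 ∈ P, c * (f j1 * g j2)
      = c * ((∑ j ∈ P, f j) * (∑ j ∈ P, g j)) := by
  rw [Finset.sum_mul_sum, Finset.mul_sum]
  exact Finset.sum_congr rfl fun j1 _ => by rw [Finset.mul_sum]

lemma RhEk_eq (hL : 0 < L) (hh : 0 ≤ meshH L J) (x : ℝ × ℝ) :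
    RhEk L J k x
      = 8 / (3 * meshH L J ^ 2) * (lamK L k)⁻¹ * (meshH L J ^ 2)⁻¹
          * (3 / (2 * meshH L J ^ 2))
        * ((∑ j ∈ Finset.Icc 1 J, AI L J k j * phiF L J j x.1)
            * (∑ j ∈ Finset.Icc 1 J, AI L J k j * psiF L J j x.2)
          + (∑ j ∈ Finset.Icc 1 J, AI L J k j * psiF L J j x.1)
            * (∑ j ∈ Finset.Icc 1 J, AI L J k j * phiF L J j x.2)) := by
  rw [RhEk, Finset.sum_product]
  set c : ℝ := 8 / (3 * meshH L J ^ 2) * (lamK L k)⁻¹ * (meshH L J ^ 2)⁻¹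
      * (3 / (2 * meshH L J ^ 2)) with hc
  have hstep : ∀ j1 ∈ Finset.Icc 1 J, ∀ j2 ∈ Finset.Icc 1 J,
      coefC L J k (j1, j2) * Phi2 L J (j1, j2) x
        = c * ((AI L J k j1 * phiF L J j1 x.1) * (AI L J k j2 * psiF L J j2 x.2))
          + c * ((AI L J k j1 * psiF L J j1 x.1) * (AI L J k j2 * phiF L J j2 x.2)) := by
    intro j1 hj1 j2 hj2
    simp only [Finset.mem_Icc] at hj1 hj2
    rw [coefC_eq hL hh hj1.1 hj2.1, Phi2, hc]
    ring
  rw [Finset.sum_congr rfl (fun j1 hj1 =>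
    Finset.sum_congr rfl (fun j2 hj2 => hstep j1 hj1 j2 hj2))]
  simp only [Finset.sum_add_distrib]
  rw [double_sum_helper (Finset.Icc 1 J) c (fun j => AI L J k j * phiF L J j x.1)
      (fun j => AI L J k j * psiF L J j x.2),
    double_sum_helper (Finset.Icc 1 J) c (fun j => AI L J k j * psiF L J j x.1)
      (fun j => AI L J k j * phiF L J j x.2)]
  ring

lemma abs_mul_le {a b A B : ℝ} (ha : |a| ≤ A) (hb : |b| ≤ B) : |a * b| ≤ A * B := by
  rw [abs_mul]
  exact mul_le_mul ha hb (abs_nonneg _) ((abs_nonneg a).trans ha)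

lemma AI_sub_pred (hh : 0 ≤ meshH L J) (hom : 0 ≤ om L k) {i : ℕ} (hi : 1 ≤ i) :
    |AI L J k (i-1) - AI L J k i| ≤ om L k * meshH L J ^ 2 := by
  have hint1 : IntervalIntegrable (fun t => sf L k (t - meshH L J)) MeasureTheory.volume
      (nodeX L J i - meshH L J) (nodeX L J i) :=
    (Continuous.intervalIntegrable (by unfold sf; fun_prop) _ _)
  rw [AI_pred hi, AI, ← intervalIntegral.integral_sub hint1 (sf_cont.intervalIntegrable _ _)]
  have hb := intervalIntegral.norm_integral_le_of_norm_le_const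
    (a := nodeX L J i - meshH L J) (b := nodeX L J i) (C := om L k * meshH L J)
    (f := fun t => sf L k (t - meshH L J) - sf L k t) ?_
  · rw [Real.norm_eq_abs, show nodeX L J i - (nodeX L J i - meshH L J) = meshH L J by ring,
      abs_of_nonneg hh] at hb
    calc _ ≤ om L k * meshH L J * meshH L J := hb
      _ = om L k * meshH L J ^ 2 := by ring
  · intro t _
    rw [Real.norm_eq_abs]
    have h1 := sf_lip (L := L) (k := k) hom (t - meshH L J) t
    rw [show t - meshH L J - t = -(meshH L J) by ring, abs_neg, abs_of_nonneg hh] at h1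
    exact h1

lemma AI_sub_succ (hh : 0 ≤ meshH L J) (hom : 0 ≤ om L k) (i : ℕ) :
    |AI L J k (i+1) - AI L J k i| ≤ om L k * meshH L J ^ 2 := by
  have hint1 : IntervalIntegrable (fun t => sf L k (t + meshH L J)) MeasureTheory.volume
      (nodeX L J i - meshH L J) (nodeX L J i) :=
    (Continuous.intervalIntegrable (by unfold sf; fun_prop) _ _)
  rw [AI_succ, AI, ← intervalIntegral.integral_sub hint1 (sf_cont.intervalIntegrable _ _)]
  have hb := intervalIntegral.norm_integral_le_of_norm_le_const
    (a := nodeX L J i - meshH L J) (b := nodeX L J i) (C := om L k * meshH L J)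
    (f := fun t => sf L k (t + meshH L J) - sf L k t) ?_
  · rw [Real.norm_eq_abs, show nodeX L J i - (nodeX L J i - meshH L J) = meshH L J by ring,
      abs_of_nonneg hh] at hb
    calc _ ≤ om L k * meshH L J * meshH L J := hb
      _ = om L k * meshH L J ^ 2 := by ring
  · intro t _
    rw [Real.norm_eq_abs]
    have h1 := sf_lip (L := L) (k := k) hom (t + meshH L J) t
    rw [show t + meshH L J - t = meshH L J by ring, abs_of_nonneg hh] at h1
    exact h1

lemma J_mul_meshH (hJ : 0 < J) : (J:ℝ) * meshH L J = 2 * L := by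
  have h : (J:ℝ) ≠ 0 := by exact_mod_cast hJ.ne'
  unfold meshH
  field_simp

lemma exists_cell (hh : 0 < meshH L J) (hJ : 0 < J) {t : ℝ} (htl : -L < t) (htu : t < L) :
    ∃ i : ℕ, 1 ≤ i ∧ i ≤ J ∧ nodeX L J (i-1) < t ∧ t ≤ nodeX L J i := by
  have hLpos : 0 < t + L := by linarith
  set u := (t + L) / meshH L J with hu
  have hu0 : 0 < u := div_pos hLpos hh
  have huH : u * meshH L J = t + L := div_mul_cancel₀ _ hh.ne'
  have huJ : u < J := by
    rw [hu, div_lt_iff₀ hh, J_mul_meshH hJ]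
    linarith
  have hge : 1 ≤ ⌈u⌉₊ := Nat.one_le_ceil_iff.2 hu0
  refine ⟨⌈u⌉₊, hge, Nat.ceil_le.2 huJ.le, ?_, ?_⟩
  · have h1 : (⌈u⌉₊:ℝ) < u + 1 := Nat.ceil_lt_add_one hu0.le
    have hcast : ((⌈u⌉₊ - 1 : ℕ) : ℝ) = (⌈u⌉₊:ℝ) - 1 := by
      push_cast [hge]
      ring
    unfold nodeX
    rw [hcast]
    nlinarith
  · have h2 : u ≤ (⌈u⌉₊:ℝ) := Nat.le_ceil u
    unfold nodeX
    nlinarith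


lemma Ebound {W H B C A qa qb : ℝ} (hB : |B - A| ≤ W * H ^ 2) (hC : |C - A| ≤ W * H ^ 2)
    (hqa0 : 0 ≤ qa) (hqb0 : 0 ≤ qb) (hqa : qa ≤ H ^ 2) (hqb : qb ≤ H ^ 2) :
    |1/4 * (B - A) * qa + 1/4 * (C - A) * qb| ≤ W * H ^ 4 / 2 := by
  have h1 : |1/4 * (B - A) * qa| ≤ 1/4 * (W * H ^ 2 * H ^ 2) := by
    rw [show (1:ℝ)/4 * (B - A) * qa = 1/4 * ((B - A) * qa) by ring, abs_mul,
      abs_mul, abs_of_nonneg hqa0, show |(1:ℝ)/4| = 1/4 by norm_num]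
    have := mul_le_mul hB hqa hqa0 (le_trans (abs_nonneg _) hB)
    linarith
  have h2 : |1/4 * (C - A) * qb| ≤ 1/4 * (W * H ^ 2 * H ^ 2) := by
    rw [show (1:ℝ)/4 * (C - A) * qb = 1/4 * ((C - A) * qb) by ring, abs_mul,
      abs_mul, abs_of_nonneg hqb0, show |(1:ℝ)/4| = 1/4 by norm_num]
    have := mul_le_mul hC hqb hqb0 (le_trans (abs_nonneg _) hC)
    linarith
  calc |1/4 * (B - A) * qa + 1/4 * (C - A) * qb|
      ≤ |1/4 * (B - A) * qa| + |1/4 * (C - A) * qb| := abs_add_le _ _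
    _ ≤ 1/4 * (W * H ^ 2 * H ^ 2) + 1/4 * (W * H ^ 2 * H ^ 2) := add_le_add h1 h2
    _ = W * H ^ 4 / 2 := by ring

lemma cos_ub {W H : ℝ} : 1 - Real.cos (W * H) ≤ W ^ 2 * H ^ 2 / 2 := by
  nlinarith [Real.one_sub_sq_div_two_le_cos (x := W * H)]

lemma cos_nn {W H : ℝ} : 0 ≤ 1 - Real.cos (W * H) := by
  nlinarith [Real.cos_le_one (W * H)]

lemma cos_lb {W H : ℝ} (hW : 0 < W) (hH : 0 < H) (hsmall : W * H ≤ 1) :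
    W ^ 2 * H ^ 2 / 2 - W ^ 4 * H ^ 4 / 16 ≤ 1 - Real.cos (W * H) := by
  set y := W * H / 2 with hydef
  have hy0 : 0 < y := by positivity
  have hy1 : y ≤ 1 := by rw [hydef]; linarith
  have hsin : y - y ^ 3 / 4 < Real.sin y := by
    have := Real.sin_gt_sub_cube hy0; nlinarith [pow_pos hy0 3]
  have hcos2 : Real.cos (W * H) = 1 - 2 * Real.sin y ^ 2 := by
    rw [show W * H = 2 * y by rw [hydef]; ring, Real.cos_two_mul]
    have := Real.sin_sq_add_cos_sq y
    linarith
  have hsge : 0 ≤ y - y ^ 3 / 4 := by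
    nlinarith [mul_nonneg (mul_nonneg hy0.le (by linarith : (0:ℝ) ≤ 1 - y))
      (by linarith : (0:ℝ) ≤ 1 + y)]
  have hs2ge : (y - y ^ 3 / 4) ^ 2 ≤ Real.sin y ^ 2 := by nlinarith
  have hexp : W ^ 2 * H ^ 2 / 2 - W ^ 4 * H ^ 4 / 16 = 2 * y ^ 2 - y ^ 4 := by
    rw [hydef]; ring
  rw [hexp, hcos2]
  nlinarith [pow_nonneg hy0.le 6]

set_option maxHeartbeats 1000000 in
lemma numer_bound {W H c A1 A2 s1 s2 E1 E2 : ℝ}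
    (hW : 0 < W) (hH : 0 < H) (hsmall : W * H ≤ 1)
    (hδ0 : 0 ≤ 1 - c) (hδu : 1 - c ≤ W ^ 2 * H ^ 2 / 2)
    (hδl : W ^ 2 * H ^ 2 / 2 - W ^ 4 * H ^ 4 / 16 ≤ 1 - c)
    (hs1 : |s1| ≤ 1) (hs2 : |s2| ≤ 1)
    (hA1 : |A1| ≤ H) (hA2 : |A2| ≤ H)
    (happ1 : |A1 - H * s1| ≤ W * H ^ 2) (happ2 : |A2 - H * s2| ≤ W * H ^ 2)
    (hE1b : |E1| ≤ W * H ^ 4 / 2) (hE2b : |E2| ≤ W * H ^ 4 / 2) :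
    |W ^ 2 * H ^ 6 * (s1 * s2)
        - 2 * (1 - c) * (A1 * (H ^ 2 / 2 * A2 + E2) + A2 * (H ^ 2 / 2 * A1 + E1))|
      ≤ 5 * W * H * (W ^ 2 * H ^ 6) := by
  have hprod : |H ^ 2 * (s1 * s2) - A1 * A2| ≤ 2 * (W * H ^ 3) := by
    rw [show H ^ 2 * (s1 * s2) - A1 * A2
        = -(A1 * (A2 - H * s2) + (H * s2) * (A1 - H * s1)) by ring, abs_neg]
    have hHs2 : |H * s2| ≤ H * 1 := abs_mul_le (le_of_eq (abs_of_nonneg hH.le)) hs2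
    calc |A1 * (A2 - H * s2) + (H * s2) * (A1 - H * s1)|
        ≤ |A1 * (A2 - H * s2)| + |(H * s2) * (A1 - H * s1)| := abs_add_le _ _
      _ ≤ H * (W * H ^ 2) + (H * 1) * (W * H ^ 2) :=
          add_le_add (abs_mul_le hA1 happ2) (abs_mul_le hHs2 happ1)
      _ = 2 * (W * H ^ 3) := by ring
  have hdel : |W ^ 2 * H ^ 2 - 2 * (1 - c)| ≤ W ^ 4 * H ^ 4 / 8 := by
    have hp : (0:ℝ) ≤ W ^ 4 * H ^ 4 / 8 := by positivity
    rw [abs_le]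
    constructor
    · linarith
    · linarith
  have hT1 : |(W ^ 2 * H ^ 2 - 2 * (1 - c)) * (H ^ 4 * (s1 * s2))|
      ≤ W ^ 4 * H ^ 4 / 8 * (H ^ 4 * (1 * 1)) :=
    abs_mul_le hdel (abs_mul_le (le_of_eq (abs_of_nonneg (by positivity)))
      (abs_mul_le hs1 hs2))
  have hT2 : |2 * (1 - c) * H ^ 2 * (H ^ 2 * (s1 * s2) - A1 * A2)|
      ≤ (W ^ 2 * H ^ 2 / 2 * H ^ 2 * 2) * (2 * (W * H ^ 3)) := by
    refine abs_mul_le ?_ hprod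
    have hsq : (0:ℝ) ≤ H ^ 2 := sq_nonneg H
    rw [abs_of_nonneg (by nlinarith)]
    nlinarith [mul_le_mul_of_nonneg_right hδu (by positivity : (0:ℝ) ≤ 2 * H ^ 2)]
  have hT3 : |2 * (1 - c) * (A1 * E2 + A2 * E1)|
      ≤ (W ^ 2 * H ^ 2) * (H * (W * H ^ 4 / 2) + H * (W * H ^ 4 / 2)) := by
    refine abs_mul_le ?_ ?_
    · rw [abs_of_nonneg (by linarith)]
      linarith
    · calc |A1 * E2 + A2 * E1| ≤ |A1 * E2| + |A2 * E1| := abs_add_le _ _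
        _ ≤ H * (W * H ^ 4 / 2) + H * (W * H ^ 4 / 2) :=
            add_le_add (abs_mul_le hA1 hE2b) (abs_mul_le hA2 hE1b)
  have hsplit : W ^ 2 * H ^ 6 * (s1 * s2)
      - 2 * (1 - c) * (A1 * (H ^ 2 / 2 * A2 + E2) + A2 * (H ^ 2 / 2 * A1 + E1))
      = (W ^ 2 * H ^ 2 - 2 * (1 - c)) * (H ^ 4 * (s1 * s2))
        + 2 * (1 - c) * H ^ 2 * (H ^ 2 * (s1 * s2) - A1 * A2)
        - 2 * (1 - c) * (A1 * E2 + A2 * E1) := by ring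
  rw [hsplit]
  have htri : |(W ^ 2 * H ^ 2 - 2 * (1 - c)) * (H ^ 4 * (s1 * s2))
        + 2 * (1 - c) * H ^ 2 * (H ^ 2 * (s1 * s2) - A1 * A2)
        - 2 * (1 - c) * (A1 * E2 + A2 * E1)|
      ≤ |(W ^ 2 * H ^ 2 - 2 * (1 - c)) * (H ^ 4 * (s1 * s2))|
        + |2 * (1 - c) * H ^ 2 * (H ^ 2 * (s1 * s2) - A1 * A2)|
        + |2 * (1 - c) * (A1 * E2 + A2 * E1)| := by
    rw [sub_eq_add_neg]
    refine (abs_add_le _ _).trans ?_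
    rw [abs_neg]
    exact add_le_add (abs_add_le _ _) le_rfl
  refine htri.trans ?_
  have hWH : W * H * (W ^ 3 * H ^ 7) ≤ 1 * (W ^ 3 * H ^ 7) :=
    mul_le_mul_of_nonneg_right hsmall (by positivity)
  have hWH' : W ^ 4 * H ^ 8 ≤ W ^ 3 * H ^ 7 := by
    calc W ^ 4 * H ^ 8 = W * H * (W ^ 3 * H ^ 7) := by ring
      _ ≤ 1 * (W ^ 3 * H ^ 7) := hWH
      _ = W ^ 3 * H ^ 7 := one_mul _
  have e1 : W ^ 4 * H ^ 4 / 8 * (H ^ 4 * (1 * 1)) = W ^ 4 * H ^ 8 / 8 := by ring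
  have e2 : (W ^ 2 * H ^ 2 / 2 * H ^ 2 * 2) * (2 * (W * H ^ 3)) = 2 * (W ^ 3 * H ^ 7) := by
    ring
  have e3 : (W ^ 2 * H ^ 2) * (H * (W * H ^ 4 / 2) + H * (W * H ^ 4 / 2)) = W ^ 3 * H ^ 7 := by
    ring
  have e4 : 5 * W * H * (W ^ 2 * H ^ 6) = 5 * (W ^ 3 * H ^ 7) := by ring
  rw [e1] at hT1
  rw [e2] at hT2
  rw [e3] at hT3
  rw [e4]
  have hpos : (0:ℝ) ≤ W ^ 3 * H ^ 7 := by positivity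
  linarith

set_option maxHeartbeats 1000000 in
lemma pointwise (hL : 0 < L) (hk : 1 ≤ k) (hJ : 4 ≤ J)
    (hsmall : om L k * meshH L J ≤ 1) {x : ℝ × ℝ}
    (hx1l : -L < x.1) (hx1u : x.1 < L) (hx2l : -L < x.2) (hx2u : x.2 < L) :
    |eK L k x - RhEk L J k x| ≤ 5 * om L k * meshH L J := by
  have hH : 0 < meshH L J := meshH_pos hL (by omega)
  have hW : 0 < om L k := om_pos hL hk
  obtain ⟨i1, hi11, hi1J, hc1l, hc1u⟩ := exists_cell hH (by omega) hx1l hx1u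
  obtain ⟨i2, hi21, hi2J, hc2l, hc2u⟩ := exists_cell hH (by omega) hx2l hx2u
  have hφ1 := sum_phi (k := k) hL hH hJ hi11 hi1J hc1l hc1u
  have hφ2 := sum_phi (k := k) hL hH hJ hi21 hi2J hc2l hc2u
  have hψ1 := sum_psi (k := k) hL hH hJ hi11 hi1J hc1l hc1u
  have hψ2 := sum_psi (k := k) hL hH hJ hi21 hi2J hc2l hc2u
  rw [nodeX_sub_one hi11] at hψ1 hc1l
  rw [nodeX_sub_one hi21] at hψ2 hc2l
  have hpas1 := AI_pred_add_succ (L := L) (J := J) (k := k) (i := i1) hi11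
  have hpas2 := AI_pred_add_succ (L := L) (J := J) (k := k) (i := i2) hi21
  have habsA1 := abs_AI_le (L := L) (J := J) (k := k) hH.le i1
  have habsA2 := abs_AI_le (L := L) (J := J) (k := k) hH.le i2
  have happ1 := AI_approx (L := L) (J := J) (k := k) hH.le hW.le i1
    ⟨by linarith, hc1u⟩
  have happ2 := AI_approx (L := L) (J := J) (k := k) hH.le hW.le i2
    ⟨by linarith, hc2u⟩
  have hsub1m := AI_sub_pred (L := L) (J := J) (k := k) hH.le hW.le hi11
  have hsub1p := AI_sub_succ (L := L) (J := J) (k := k) hH.le hW.le i1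
  have hsub2m := AI_sub_pred (L := L) (J := J) (k := k) hH.le hW.le hi21
  have hsub2p := AI_sub_succ (L := L) (J := J) (k := k) hH.le hW.le i2
  have hs1 : |sf L k x.1| ≤ 1 := sf_abs_le _
  have hs2 : |sf L k x.2| ≤ 1 := sf_abs_le _
  have hRheq := RhEk_eq (k := k) hL hH.le x
  have heK : eK L k x = sf L k x.1 * sf L k x.2 := by
    unfold eK sf om
    rw [show Real.pi * (k:ℝ) * (x.1 + L) / L = Real.pi * (k:ℝ) / L * (x.1 + L) by ring,
      show Real.pi * (k:ℝ) * (x.2 + L) / L = Real.pi * (k:ℝ) / L * (x.2 + L) by ring]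
  have hCt : 8 / (3 * meshH L J ^ 2) * (lamK L k)⁻¹ * (meshH L J ^ 2)⁻¹
      * (3 / (2 * meshH L J ^ 2)) = 2 / (om L k ^ 2 * meshH L J ^ 6) := by
    have hlam : lamK L k = 2 * om L k ^ 2 := rfl
    rw [hlam]
    have h1 : om L k ≠ 0 := hW.ne'
    have h2 : meshH L J ≠ 0 := hH.ne'
    field_simp
    ring
  -- abbreviations
  set W := om L k with hWdef
  set H := meshH L J with hHdef
  set c := Real.cos (W * H) with hcdef
  set A1 := AI L J k i1 with hA1def
  set B1 := AI L J k (i1 - 1) with hB1def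
  set C1 := AI L J k (i1 + 1) with hC1def
  set A2 := AI L J k i2 with hA2def
  set B2 := AI L J k (i2 - 1) with hB2def
  set C2 := AI L J k (i2 + 1) with hC2def
  set s1 := sf L k x.1 with hs1def
  set s2 := sf L k x.2 with hs2def
  set n1 := nodeX L J i1 with hn1def
  set n2 := nodeX L J i2 with hn2def
  have hF1 : -B1 / 2 + A1 - C1 / 2 = (1 - c) * A1 := by linear_combination (-(1:ℝ)/2) * hpas1
  have hF2 : -B2 / 2 + A2 - C2 / 2 = (1 - c) * A2 := by linear_combination (-(1:ℝ)/2) * hpas2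
  set E1 : ℝ := 1/4 * (B1 - A1) * (n1 - x.1) ^ 2 + 1/4 * (C1 - A1) * (x.1 - (n1 - H)) ^ 2
    with hE1def
  set E2 : ℝ := 1/4 * (B2 - A2) * (n2 - x.2) ^ 2 + 1/4 * (C2 - A2) * (x.2 - (n2 - H)) ^ 2
    with hE2def
  have hRh : RhEk L J k x
      = 2 * (1 - c) * (A1 * (H ^ 2 / 2 * A2 + E2) + A2 * (H ^ 2 / 2 * A1 + E1))
          / (W ^ 2 * H ^ 6) := by
    rw [hRheq, hφ1, hφ2, hψ1, hψ2, hF1, hF2, hCt, hE1def, hE2def]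
    ring
  have hq1a : (n1 - x.1) ^ 2 ≤ H ^ 2 := by
    have h1 : 0 ≤ n1 - x.1 := by linarith
    have h2 : n1 - x.1 ≤ H := by linarith
    exact pow_le_pow_left₀ h1 h2 2
  have hq1b : (x.1 - (n1 - H)) ^ 2 ≤ H ^ 2 := by
    have h1 : 0 ≤ x.1 - (n1 - H) := by linarith
    have h2 : x.1 - (n1 - H) ≤ H := by linarith
    exact pow_le_pow_left₀ h1 h2 2
  have hq2a : (n2 - x.2) ^ 2 ≤ H ^ 2 := by
    have h1 : 0 ≤ n2 - x.2 := by linarith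
    have h2 : n2 - x.2 ≤ H := by linarith
    exact pow_le_pow_left₀ h1 h2 2
  have hq2b : (x.2 - (n2 - H)) ^ 2 ≤ H ^ 2 := by
    have h1 : 0 ≤ x.2 - (n2 - H) := by linarith
    have h2 : x.2 - (n2 - H) ≤ H := by linarith
    exact pow_le_pow_left₀ h1 h2 2
  have hE1b : |E1| ≤ W * H ^ 4 / 2 := by
    rw [hE1def]
    exact Ebound hsub1m hsub1p (sq_nonneg _) (sq_nonneg _) hq1a hq1b
  have hE2b : |E2| ≤ W * H ^ 4 / 2 := by
    rw [hE2def]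
    exact Ebound hsub2m hsub2p (sq_nonneg _) (sq_nonneg _) hq2a hq2b
  have hnum := numer_bound (c := c) hW hH hsmall cos_nn cos_ub (cos_lb hW hH hsmall)
    hs1 hs2 habsA1 habsA2 happ1 happ2 hE1b hE2b
  rw [heK, hRh]
  have hD : (0:ℝ) < W ^ 2 * H ^ 6 := by positivity
  rw [show s1 * s2
      - 2 * (1 - c) * (A1 * (H ^ 2 / 2 * A2 + E2) + A2 * (H ^ 2 / 2 * A1 + E1))
        / (W ^ 2 * H ^ 6)
      = (W ^ 2 * H ^ 6 * (s1 * s2)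
          - 2 * (1 - c) * (A1 * (H ^ 2 / 2 * A2 + E2) + A2 * (H ^ 2 / 2 * A1 + E1)))
        / (W ^ 2 * H ^ 6) by field_simp [hW.ne', hH.ne']]
  rw [abs_div, abs_of_pos hD, div_le_iff₀ hD]
  exact hnum.trans (le_of_eq (by ring))

end Stmt13Aux


/-- Lemma 5.3: for fixed `k ≥ 1` and `p ≥ 1`, the restriction `R_h e_k` of the
eigenfunction `e_k` converges to `e_k` in `L^p((−L,L)²)` as `m → ∞`
(`J = 2^m`, `h = 2L/J`). -/
theorem stmt13 (L : ℝ) (hL : 0 < L) (k : ℕ) (hk : 1 ≤ k) (p : ℝ) (hp : 1 ≤ p) :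
    Filter.Tendsto
      (fun m : ℕ =>
        eLpNorm (fun x => eK L k x - RhEk L (2 ^ m) k x) (ENNReal.ofReal p)
          (volume.restrict (sq2 L)))
      Filter.atTop (nhds 0) := by
  have hW : 0 < Stmt13Aux.om L k := Stmt13Aux.om_pos hL hk
  have hmesh : Filter.Tendsto (fun m : ℕ => meshH L (2 ^ m)) Filter.atTop (nhds 0) := by
    have h1 : (fun m : ℕ => meshH L (2 ^ m)) = fun m : ℕ => (2 * L) * (1/2 : ℝ) ^ m := by
      funext m
      unfold meshH
      rw [Nat.cast_pow, div_pow, one_pow]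
      ring
    rw [h1]
    have h2 := tendsto_pow_atTop_nhds_zero_of_lt_one (by norm_num : (0:ℝ) ≤ 1/2)
      (by norm_num : (1/2:ℝ) < 1)
    simpa using h2.const_mul (2 * L)
  have hev1 : ∀ᶠ m : ℕ in Filter.atTop, Stmt13Aux.om L k * meshH L (2 ^ m) ≤ 1 := by
    have hlt : (0:ℝ) < (Stmt13Aux.om L k)⁻¹ := by positivity
    filter_upwards [hmesh.eventually (eventually_lt_nhds hlt)] with m hm
    have h3 : Stmt13Aux.om L k * meshH L (2 ^ m)
        < Stmt13Aux.om L k * (Stmt13Aux.om L k)⁻¹ := by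
      exact mul_lt_mul_of_pos_left hm hW
    rw [mul_inv_cancel₀ hW.ne'] at h3
    linarith
  have hev2 : ∀ᶠ m : ℕ in Filter.atTop, 4 ≤ 2 ^ m :=
    Filter.eventually_atTop.2 ⟨2, fun m hm => by
      calc 4 = 2 ^ 2 := rfl
        _ ≤ 2 ^ m := Nat.pow_le_pow_right (by norm_num) hm⟩
  have hms : MeasurableSet (sq2 L) := by
    unfold sq2
    exact measurableSet_Ioo.prod measurableSet_Ioo
  have hvol : volume (sq2 L) ≠ ⊤ := by
    unfold sq2
    rw [MeasureTheory.Measure.volume_eq_prod, MeasureTheory.Measure.prod_prod,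
      Real.volume_Ioo]
    exact ENNReal.mul_ne_top ENNReal.ofReal_ne_top ENNReal.ofReal_ne_top
  have hKtop : volume (sq2 L) ^ (ENNReal.ofReal p).toReal⁻¹ ≠ ⊤ :=
    ENNReal.rpow_ne_top_of_nonneg (by positivity) hvol
  refine tendsto_of_tendsto_of_tendsto_of_le_of_le' (g := fun _ : ℕ => (0:ENNReal))
    (h := fun m : ℕ => volume (sq2 L) ^ (ENNReal.ofReal p).toReal⁻¹
      * ENNReal.ofReal (5 * Stmt13Aux.om L k * meshH L (2 ^ m)))
    tendsto_const_nhds ?_ (Filter.Eventually.of_forall (fun m => zero_le)) ?_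
  · have h5 : Filter.Tendsto (fun m : ℕ => 5 * Stmt13Aux.om L k * meshH L (2 ^ m))
        Filter.atTop (nhds 0) := by
      simpa using hmesh.const_mul (5 * Stmt13Aux.om L k)
    have hofReal := ENNReal.tendsto_ofReal h5
    rw [ENNReal.ofReal_zero] at hofReal
    have h6 := ENNReal.Tendsto.const_mul hofReal (Or.inr hKtop)
    simpa using h6
  · filter_upwards [hev1, hev2] with m hm1 hm2
    have hbound : ∀ᵐ y ∂(volume.restrict (sq2 L)),
        ‖eK L k y - RhEk L (2 ^ m) k y‖ ≤ 5 * Stmt13Aux.om L k * meshH L (2 ^ m) := by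
      rw [MeasureTheory.ae_restrict_iff' hms]
      refine Filter.Eventually.of_forall fun y hy => ?_
      have hy' : y.1 ∈ Ioo (-L) L ∧ y.2 ∈ Ioo (-L) L := hy
      rw [Real.norm_eq_abs]
      exact Stmt13Aux.pointwise hL hk hm2 hm1 hy'.1.1 hy'.1.2 hy'.2.1 hy'.2.2
    have h7 := MeasureTheory.eLpNorm_le_of_ae_bound (p := ENNReal.ofReal p) hbound
    rw [MeasureTheory.Measure.restrict_apply_univ] at h7
    exact h7

end
end

section
/- Fix k ∈ ℕ, k ≥ 1, and p ≥ 1. There exists a constant C (depending only on k, p and L) such that for every m ∈ ℕ (with J = 2^m, h = 2L/J) it holds that ‖R̄_h(R_h e_k) − R_h e_k‖_{L^p((−L,L)²)} ≤ C h, where R̄_h denotes the cellwise averaging operator on the partition into cells D_𝐢. -/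
noncomputable section

open Set

open MeasureTheory

namespace S16

open Real

def aa (L : ℝ) (k : ℕ) : ℝ := Real.pi * k / L
def tv (L : ℝ) (k J : ℕ) : ℝ := aa L k * meshH L J
def Sv (L : ℝ) (k J : ℕ) (j : ℕ) : ℝ :=
  (Real.cos (tv L k J * j - tv L k J) - Real.cos (tv L k J * j)) / aa L k

variable {L : ℝ} {k J : ℕ}

lemma aa_pos (hL : 0 < L) (hk : 1 ≤ k) : 0 < aa L k := by
  have : (0:ℝ) < k := by exact_mod_cast hk
  exact div_pos (mul_pos Real.pi_pos this) hL

lemma mesh_pos (hL : 0 < L) (hJ : 1 ≤ J) : 0 < meshH L J := by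
  have : (0:ℝ) < J := by exact_mod_cast hJ
  exact div_pos (by linarith) this

lemma mesh_le (hL : 0 < L) (hJ : 1 ≤ J) : meshH L J ≤ 2 * L := by
  have h1 : (1:ℝ) ≤ J := by exact_mod_cast hJ
  rw [meshH, div_le_iff₀ (by linarith)]
  nlinarith

lemma tv_pos (hL : 0 < L) (hk : 1 ≤ k) (hJ : 1 ≤ J) : 0 < tv L k J :=
  mul_pos (aa_pos hL hk) (mesh_pos hL hJ)

lemma nodeX_add_one (i : ℕ) : nodeX L J (i+1) = nodeX L J i + meshH L J := by
  simp only [nodeX]; push_cast; ring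

lemma cast_sub_one {i : ℕ} (hi : 1 ≤ i) : ((i - 1 : ℕ) : ℝ) = (i : ℝ) - 1 := by
  rw [Nat.cast_sub hi, Nat.cast_one]

lemma nodeX_sub_one {i : ℕ} (hi : 1 ≤ i) : nodeX L J (i-1) = nodeX L J i - meshH L J := by
  simp only [nodeX, cast_sub_one hi]; ring

lemma nodeX_mono (hL : 0 < L) (hJ : 1 ≤ J) {i j : ℕ} (hij : i ≤ j) :
    nodeX L J i ≤ nodeX L J j := by
  have := mesh_pos hL hJ
  have hc : (i:ℝ) ≤ j := by exact_mod_cast hij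
  simp only [nodeX]
  nlinarith

lemma nodeX_zero : nodeX L J 0 = -L := by simp [nodeX]

lemma nodeX_add_L (j : ℕ) : nodeX L J j + L = j * meshH L J := by simp [nodeX]

lemma nodeX_last (hJ : 1 ≤ J) : nodeX L J J = L := by
  have : (J:ℝ) ≠ 0 := by positivity
  simp only [nodeX, meshH]
  field_simp
  ring

lemma tv_mul_J (hL : 0 < L) (hJ : 1 ≤ J) : tv L k J * J = 2 * Real.pi * k := by
  have hJ' : (J:ℝ) ≠ 0 := by positivity
  have hL' : L ≠ 0 := ne_of_gt hL
  simp only [tv, aa, meshH]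
  field_simp

lemma trig3 (u v : ℝ) :
    Real.cos (u - 3*v) - 3 * Real.cos (u - v) + 3 * Real.cos (u + v) - Real.cos (u + 3*v)
      = -(8 * Real.sin v ^ 3 * Real.sin u) := by
  simp only [Real.cos_add, Real.cos_sub, Real.cos_three_mul, Real.sin_three_mul]
  ring

lemma trig2 (u v : ℝ) :
    (Real.cos (u + v) - Real.cos (u + 3*v)) - (Real.cos (u - 3*v) - Real.cos (u - v))
      = 8 * Real.sin v ^ 2 * Real.cos v * Real.cos u := by
  simp only [Real.cos_add, Real.cos_sub, Real.cos_three_mul, Real.sin_three_mul]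
  linear_combination (-(8 * Real.cos u * Real.cos v)) * (Real.sin_sq_add_cos_sq v)

lemma Sv_zero : Sv L k J 0 = - Sv L k J 1 := by
  simp only [Sv, Nat.cast_zero, Nat.cast_one, mul_zero, mul_one, zero_sub, Real.cos_neg]
  ring

lemma Sv_top (hL : 0 < L) (hJ : 1 ≤ J) : Sv L k J (J+1) = - Sv L k J J := by
  have h2 : tv L k J * J = 2 * Real.pi * k := tv_mul_J hL hJ
  have c1 : Real.cos (tv L k J * ((J:ℝ)+1) - tv L k J) = 1 := by
    rw [show tv L k J * ((J:ℝ)+1) - tv L k J = tv L k J * J by ring, h2,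
        show 2 * Real.pi * (k:ℝ) = (k:ℝ) * (2 * Real.pi) by ring]
    exact Real.cos_nat_mul_two_pi k
  have c2 : Real.cos (tv L k J * ((J:ℝ)+1)) = Real.cos (tv L k J) := by
    rw [show tv L k J * ((J:ℝ)+1) = tv L k J + (k:ℝ) * (2 * Real.pi) by
          rw [mul_add, mul_one]; linarith [h2]]
    exact Real.cos_add_nat_mul_two_pi _ k
  have c3 : Real.cos (tv L k J * (J:ℝ) - tv L k J) = Real.cos (tv L k J) := by
    rw [show tv L k J * (J:ℝ) - tv L k J = -(tv L k J) + (k:ℝ) * (2 * Real.pi) by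
          linarith [h2]]
    rw [Real.cos_add_nat_mul_two_pi, Real.cos_neg]
  have c4 : Real.cos (tv L k J * (J:ℝ)) = 1 := by
    rw [h2, show 2 * Real.pi * (k:ℝ) = (k:ℝ) * (2 * Real.pi) by ring]
    exact Real.cos_nat_mul_two_pi k
  simp only [Sv]
  push_cast
  rw [c1, c2, c3, c4]
  ring

lemma Sv_abs (hL : 0 < L) (hk : 1 ≤ k) (j : ℕ) : |Sv L k J j| ≤ 2 / aa L k := by
  have ha := aa_pos hL hk
  rw [Sv, abs_div, abs_of_pos ha]
  gcongr
  calc |Real.cos (tv L k J * j - tv L k J) - Real.cos (tv L k J * j)|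
      ≤ |Real.cos (tv L k J * j - tv L k J)| + |Real.cos (tv L k J * j)| := abs_sub _ _
    _ ≤ 1 + 1 := add_le_add (Real.abs_cos_le_one _) (Real.abs_cos_le_one _)
    _ = 2 := by norm_num

lemma sin_half_bound {t : ℝ} (ht : 0 ≤ t) : |Real.sin (t/2)| ≤ t/2 :=
  calc |Real.sin (t/2)| ≤ |t/2| := Real.abs_sin_le_abs
    _ = t/2 := abs_of_nonneg (by linarith)

lemma Sv_dd {i : ℕ} (hi : 1 ≤ i) (hL : 0 < L) (hk : 1 ≤ k) (hJ : 1 ≤ J) :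
    |Sv L k J (i-1) - 2 * Sv L k J i + Sv L k J (i+1)| ≤ tv L k J ^ 3 / aa L k := by
  have ha := aa_pos hL hk
  have ht := le_of_lt (tv_pos hL hk hJ)
  set t := tv L k J with htdef
  have key : Sv L k J (i-1) - 2 * Sv L k J i + Sv L k J (i+1)
      = -(8 * Real.sin (t/2) ^ 3 * Real.sin (t * i - t/2)) / aa L k := by
    have h3 := trig3 (t * i - t/2) (t/2)
    rw [show t*(i:ℝ) - t/2 - 3*(t/2) = t*i - 2*t by ring,
        show t*(i:ℝ) - t/2 - t/2 = t*i - t by ring,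
        show t*(i:ℝ) - t/2 + t/2 = t*i by ring,
        show t*(i:ℝ) - t/2 + 3*(t/2) = t*i + t by ring] at h3
    simp only [Sv, cast_sub_one hi]
    push_cast
    rw [show t * ((i:ℝ) - 1) - t = t*(i:ℝ) - 2*t by ring,
        show t * ((i:ℝ) - 1) = t*(i:ℝ) - t by ring,
        show t * ((i:ℝ) + 1) - t = t*(i:ℝ) by ring,
        show t * ((i:ℝ) + 1) = t*(i:ℝ) + t by ring]
    linear_combination h3 / aa L k
  rw [key, abs_div, abs_of_pos ha]
  gcongr
  calc |-(8 * Real.sin (t/2) ^ 3 * Real.sin (t * i - t/2))|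
      = 8 * |Real.sin (t/2)| ^ 3 * |Real.sin (t * i - t/2)| := by
        rw [abs_neg, abs_mul, abs_mul, abs_pow]; norm_num
    _ ≤ 8 * (t/2)^3 * 1 := by
        have A : |Real.sin (t/2)|^3 ≤ (t/2)^3 :=
          pow_le_pow_left₀ (abs_nonneg _) (sin_half_bound ht) 3
        exact mul_le_mul (by linarith) (Real.abs_sin_le_one _) (abs_nonneg _) (by positivity)
    _ = t^3 := by ring

lemma Sv_d1 {i : ℕ} (hi : 1 ≤ i) (hL : 0 < L) (hk : 1 ≤ k) (hJ : 1 ≤ J) :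
    |Sv L k J (i+1) - Sv L k J (i-1)| ≤ 2 * tv L k J ^ 2 / aa L k := by
  have ha := aa_pos hL hk
  have ht := le_of_lt (tv_pos hL hk hJ)
  set t := tv L k J with htdef
  have key : Sv L k J (i+1) - Sv L k J (i-1)
      = (8 * Real.sin (t/2) ^ 2 * Real.cos (t/2) * Real.cos (t * i - t/2)) / aa L k := by
    have h3 := trig2 (t * i - t/2) (t/2)
    rw [show t*(i:ℝ) - t/2 - 3*(t/2) = t*i - 2*t by ring,
        show t*(i:ℝ) - t/2 - t/2 = t*i - t by ring,
        show t*(i:ℝ) - t/2 + t/2 = t*i by ring,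
        show t*(i:ℝ) - t/2 + 3*(t/2) = t*i + t by ring] at h3
    simp only [Sv, cast_sub_one hi]
    push_cast
    rw [show t * ((i:ℝ) - 1) - t = t*(i:ℝ) - 2*t by ring,
        show t * ((i:ℝ) - 1) = t*(i:ℝ) - t by ring,
        show t * ((i:ℝ) + 1) - t = t*(i:ℝ) by ring,
        show t * ((i:ℝ) + 1) = t*(i:ℝ) + t by ring]
    linear_combination h3 / aa L k
  rw [key, abs_div, abs_of_pos ha]
  gcongr
  have hs : |Real.sin (t/2)| ≤ t/2 := sin_half_bound ht
  calc |8 * Real.sin (t/2) ^ 2 * Real.cos (t/2) * Real.cos (t * i - t/2)|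
      = 8 * |Real.sin (t/2)| ^ 2 * |Real.cos (t/2)| * |Real.cos (t * i - t/2)| := by
        rw [abs_mul, abs_mul, abs_mul, abs_pow]; norm_num
    _ ≤ 8 * (t/2)^2 * 1 * 1 := by
        have A : |Real.sin (t/2)|^2 ≤ (t/2)^2 :=
          pow_le_pow_left₀ (abs_nonneg _) hs 2
        have B : 8 * |Real.sin (t/2)|^2 * |Real.cos (t/2)| ≤ 8 * (t/2)^2 * 1 :=
          mul_le_mul (by linarith) (Real.abs_cos_le_one _) (abs_nonneg _) (by positivity)
        exact mul_le_mul B (Real.abs_cos_le_one _) (abs_nonneg _) (by positivity)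
    _ = 2 * t^2 := by ring


section Part2

open Real

variable {L : ℝ} {k J : ℕ} {i : ℕ} {x : ℝ}

lemma notmem_left (hL : 0 < L) (hJ : 1 ≤ J)
    (hx : x ∈ Ioc (nodeX L J (i-1)) (nodeX L J i)) {u v : ℕ} (hv : v ≤ i - 1) :
    x ∉ Ioc (nodeX L J u) (nodeX L J v) := by
  intro h
  exact absurd h.2 (not_le.2 (lt_of_le_of_lt (nodeX_mono hL hJ hv) hx.1))

lemma notmem_right (hL : 0 < L) (hJ : 1 ≤ J)
    (hx : x ∈ Ioc (nodeX L J (i-1)) (nodeX L J i)) {u v : ℕ} (hu : i ≤ u) :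
    x ∉ Ioc (nodeX L J u) (nodeX L J v) := by
  intro h
  exact absurd h.1 (not_lt.2 (le_trans hx.2 (nodeX_mono hL hJ hu)))

lemma notmem_Icc01 (hL : 0 < L) (hJ : 1 ≤ J)
    (hx : x ∈ Ioc (nodeX L J (i-1)) (nodeX L J i)) (h2 : 2 ≤ i) :
    x ∉ Icc (nodeX L J 0) (nodeX L J 1) := by
  intro h
  have h1i : (1:ℕ) ≤ i - 1 := by omega
  exact absurd h.2 (not_le.2 (lt_of_le_of_lt (nodeX_mono hL hJ h1i) hx.1))

lemma phi_self (hL : 0 < L) (hJ : 1 ≤ J) (h1 : 1 ≤ i) (h2 : i ≤ J)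
    (hx : x ∈ Ioc (nodeX L J (i-1)) (nodeX L J i)) :
    phiF L J i x = if i = 1 ∨ i = J then 3/2 else 1 := by
  by_cases hi1 : i = 1
  · subst hi1
    have m1 : x ∈ Icc (nodeX L J 0) (nodeX L J 1) := Ioc_subset_Icc_self hx
    have m2 : x ∉ Ioc (nodeX L J 1) (nodeX L J 2) := notmem_right hL hJ hx (le_refl 1)
    simp only [phiF, if_pos rfl, if_pos m1, if_neg m2]
    norm_num
  · by_cases hiJ : i = J
    · have m1 : x ∉ Ioc (nodeX L J (J-2)) (nodeX L J (J-1)) :=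
        notmem_left hL hJ hx (by omega)
      have m2 : x ∈ Ioc (nodeX L J (J-1)) (nodeX L J J) := by
        have hx' := hx
        rw [show i - 1 = J - 1 by omega] at hx'
        rw [hiJ] at hx'
        exact hx'
      simp only [phiF, if_neg hi1, if_pos hiJ, if_neg m1, if_pos m2]
      rw [if_pos (Or.inr hiJ)]
      norm_num
    · have m1 : x ∉ Ioc (nodeX L J (i-2)) (nodeX L J (i-1)) :=
        notmem_left hL hJ hx (by omega)
      have m3 : x ∉ Ioc (nodeX L J i) (nodeX L J (i+1)) :=
        notmem_right hL hJ hx (le_refl i)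
      simp only [phiF, if_neg hi1, if_neg hiJ, if_neg m1, if_pos hx, if_neg m3]
      rw [if_neg (by simp [hi1, hiJ])]
      norm_num

lemma phi_left (hL : 0 < L) (hJ : 1 ≤ J) (h1 : 2 ≤ i) (h2 : i ≤ J)
    (hx : x ∈ Ioc (nodeX L J (i-1)) (nodeX L J i)) :
    phiF L J (i-1) x = -(1:ℝ)/2 := by
  have hiJ : i - 1 ≠ J := by omega
  by_cases hi2 : i - 1 = 1
  · have m1 : x ∉ Icc (nodeX L J 0) (nodeX L J 1) := notmem_Icc01 hL hJ hx (by omega)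
    have m2 : x ∈ Ioc (nodeX L J 1) (nodeX L J 2) := by
      rw [show (1:ℕ) = i - 1 by omega, show (2:ℕ) = i by omega]; exact hx
    simp only [phiF, if_pos hi2, if_neg m1, if_pos m2]
    norm_num
  · have m1 : x ∉ Ioc (nodeX L J (i-1-2)) (nodeX L J (i-1-1)) := by
      rw [show i-1-1 = i-2 by omega]
      exact notmem_left hL hJ hx (by omega)
    have m2 : x ∉ Ioc (nodeX L J (i-1-1)) (nodeX L J (i-1)) := by
      rw [show i-1-1 = i-2 by omega]
      exact notmem_left hL hJ hx (by omega)
    have m3 : x ∈ Ioc (nodeX L J (i-1)) (nodeX L J (i-1+1)) := by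
      rw [show i-1+1 = i by omega]; exact hx
    simp only [phiF, if_neg hi2, if_neg hiJ, if_neg m1, if_neg m2, if_pos m3]
    norm_num

lemma phi_right (hL : 0 < L) (hJ : 1 ≤ J) (h1 : 1 ≤ i) (h2 : i + 1 ≤ J)
    (hx : x ∈ Ioc (nodeX L J (i-1)) (nodeX L J i)) :
    phiF L J (i+1) x = -(1:ℝ)/2 := by
  have hne1 : i + 1 ≠ 1 := by omega
  by_cases hiJ : i + 1 = J
  · have m1 : x ∈ Ioc (nodeX L J (J-2)) (nodeX L J (J-1)) := by
      rw [show J - 2 = i - 1 by omega, show J - 1 = i by omega]; exact hx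
    have m2 : x ∉ Ioc (nodeX L J (J-1)) (nodeX L J J) := by
      rw [show J - 1 = i by omega]
      exact notmem_right hL hJ hx (le_refl i)
    simp only [phiF, if_neg hne1, if_pos hiJ, if_pos m1, if_neg m2]
    norm_num
  · have m1 : x ∈ Ioc (nodeX L J (i+1-2)) (nodeX L J (i+1-1)) := by
      rw [show i+1-2 = i-1 by omega, show i+1-1 = i by omega]; exact hx
    have m2 : x ∉ Ioc (nodeX L J (i+1-1)) (nodeX L J (i+1)) := by
      rw [show i+1-1 = i by omega]
      exact notmem_right hL hJ hx (le_refl i)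
    have m3 : x ∉ Ioc (nodeX L J (i+1)) (nodeX L J (i+1+1)) :=
      notmem_right hL hJ hx (by omega)
    simp only [phiF, if_neg hne1, if_neg hiJ, if_pos m1, if_neg m2, if_neg m3]
    norm_num

lemma phi_far (hL : 0 < L) (hJ : 1 ≤ J) {j : ℕ} (h1 : 1 ≤ i) (h2 : i ≤ J)
    (hj1 : 1 ≤ j) (hj2 : j ≤ J) (hfar : j + 1 < i ∨ i + 1 < j)
    (hx : x ∈ Ioc (nodeX L J (i-1)) (nodeX L J i)) :
    phiF L J j x = 0 := by
  by_cases hj1' : j = 1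
  · have m1 : x ∉ Icc (nodeX L J 0) (nodeX L J 1) := notmem_Icc01 hL hJ hx (by omega)
    have m2 : x ∉ Ioc (nodeX L J 1) (nodeX L J 2) := notmem_left hL hJ hx (by omega)
    simp only [phiF, if_pos hj1', if_neg m1, if_neg m2]
    norm_num
  · by_cases hjJ : j = J
    · have hiJ : i + 1 < J := by omega
      have m1 : x ∉ Ioc (nodeX L J (J-2)) (nodeX L J (J-1)) :=
        notmem_right hL hJ hx (by omega)
      have m2 : x ∉ Ioc (nodeX L J (J-1)) (nodeX L J J) :=
        notmem_right hL hJ hx (by omega)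
      simp only [phiF, if_neg hj1', if_pos hjJ, if_neg m1, if_neg m2]
      norm_num
    · have m123 : x ∉ Ioc (nodeX L J (j-2)) (nodeX L J (j-1)) ∧
          x ∉ Ioc (nodeX L J (j-1)) (nodeX L J j) ∧
          x ∉ Ioc (nodeX L J j) (nodeX L J (j+1)) := by
        rcases hfar with hf | hf
        · exact ⟨notmem_left hL hJ hx (by omega), notmem_left hL hJ hx (by omega),
            notmem_left hL hJ hx (by omega)⟩
        · exact ⟨notmem_right hL hJ hx (by omega), notmem_right hL hJ hx (by omega),
            notmem_right hL hJ hx (by omega)⟩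
      simp only [phiF, if_neg hj1', if_neg hjJ, if_neg m123.1, if_neg m123.2.1,
        if_neg m123.2.2]
      norm_num

end Part2

section Part3

open Real

variable {L : ℝ} {k J : ℕ} {i : ℕ} {x : ℝ}

lemma psi_self (hL : 0 < L) (hJ : 1 ≤ J) (h1 : 1 ≤ i) (h2 : i ≤ J)
    (hx : x ∈ Ioc (nodeX L J (i-1)) (nodeX L J i)) :
    psiF L J i x = if i = 1 then
        -(3:ℝ)/4 * (x - nodeX L J 0)^2 + meshH L J * (x - nodeX L J 0)
      else if i = J then
        -(3:ℝ)/4 * (nodeX L J J - x)^2 + meshH L J * (nodeX L J J - x)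
      else
        -(1:ℝ)/2 * (x - nodeX L J (i-1) - meshH L J/2)^2 + 3*(meshH L J)^2/8 := by
  by_cases hi1 : i = 1
  · subst hi1
    have m1 : x ∈ Icc (nodeX L J 0) (nodeX L J 1) := Ioc_subset_Icc_self hx
    have m2 : x ∉ Ioc (nodeX L J 1) (nodeX L J 2) := notmem_right hL hJ hx (le_refl 1)
    simp only [psiF, if_pos rfl, if_pos m1, if_neg m2]
    norm_num
  · by_cases hiJ : i = J
    · have m1 : x ∉ Ioc (nodeX L J (J-2)) (nodeX L J (J-1)) :=
        notmem_left hL hJ hx (by omega)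
      have m2 : x ∈ Ioc (nodeX L J (J-1)) (nodeX L J J) := by
        have hx' := hx
        rw [show i - 1 = J - 1 by omega] at hx'
        rw [hiJ] at hx'
        exact hx'
      simp only [psiF, if_neg hi1, if_pos hiJ, if_neg m1, if_pos m2]
      ring
    · have m1 : x ∉ Ioc (nodeX L J (i-2)) (nodeX L J (i-1)) :=
        notmem_left hL hJ hx (by omega)
      have m3 : x ∉ Ioc (nodeX L J i) (nodeX L J (i+1)) :=
        notmem_right hL hJ hx (le_refl i)
      simp only [psiF, if_neg hi1, if_neg hiJ, if_neg m1, if_pos hx, if_neg m3]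
      ring

lemma psi_left (hL : 0 < L) (hJ : 1 ≤ J) (h1 : 2 ≤ i) (h2 : i ≤ J)
    (hx : x ∈ Ioc (nodeX L J (i-1)) (nodeX L J i)) :
    psiF L J (i-1) x = 1/4 * (nodeX L J i - x)^2 := by
  have hiJ : i - 1 ≠ J := by omega
  by_cases hi2 : i - 1 = 1
  · have m1 : x ∉ Icc (nodeX L J 0) (nodeX L J 1) := notmem_Icc01 hL hJ hx (by omega)
    have m2 : x ∈ Ioc (nodeX L J 1) (nodeX L J 2) := by
      rw [show (1:ℕ) = i - 1 by omega, show (2:ℕ) = i by omega]; exact hx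
    simp only [psiF, if_pos hi2, if_neg m1, if_pos m2]
    have e : nodeX L J i = nodeX L J 1 + meshH L J := by
      rw [show i = 1 + 1 by omega]
      exact nodeX_add_one 1
    rw [e]; ring
  · have m1 : x ∉ Ioc (nodeX L J (i-1-2)) (nodeX L J (i-1-1)) := by
      rw [show i-1-1 = i-2 by omega]
      exact notmem_left hL hJ hx (by omega)
    have m2 : x ∉ Ioc (nodeX L J (i-1-1)) (nodeX L J (i-1)) := by
      rw [show i-1-1 = i-2 by omega]
      exact notmem_left hL hJ hx (by omega)
    have m3 : x ∈ Ioc (nodeX L J (i-1)) (nodeX L J (i-1+1)) := by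
      rw [show i-1+1 = i by omega]; exact hx
    simp only [psiF, if_neg hi2, if_neg hiJ, if_neg m1, if_neg m2, if_pos m3]
    rw [show i-1+1 = i by omega]
    ring

lemma psi_right (hL : 0 < L) (hJ : 1 ≤ J) (h1 : 1 ≤ i) (h2 : i + 1 ≤ J)
    (hx : x ∈ Ioc (nodeX L J (i-1)) (nodeX L J i)) :
    psiF L J (i+1) x = 1/4 * (x - nodeX L J (i-1))^2 := by
  have hne1 : i + 1 ≠ 1 := by omega
  have e : nodeX L J i = nodeX L J (i-1) + meshH L J := by
    have e' := nodeX_add_one (L := L) (J := J) (i-1)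
    rw [show i-1+1 = i by omega] at e'
    exact e'
  by_cases hiJ : i + 1 = J
  · have m1 : x ∈ Ioc (nodeX L J (J-2)) (nodeX L J (J-1)) := by
      rw [show J - 2 = i - 1 by omega, show J - 1 = i by omega]; exact hx
    have m2 : x ∉ Ioc (nodeX L J (J-1)) (nodeX L J J) := by
      rw [show J - 1 = i by omega]
      exact notmem_right hL hJ hx (le_refl i)
    simp only [psiF, if_neg hne1, if_pos hiJ, if_pos m1, if_neg m2]
    rw [show J - 1 = i by omega, e]
    ring
  · have m1 : x ∈ Ioc (nodeX L J (i+1-2)) (nodeX L J (i+1-1)) := by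
      rw [show i+1-2 = i-1 by omega, show i+1-1 = i by omega]; exact hx
    have m2 : x ∉ Ioc (nodeX L J (i+1-1)) (nodeX L J (i+1)) := by
      rw [show i+1-1 = i by omega]
      exact notmem_right hL hJ hx (le_refl i)
    have m3 : x ∉ Ioc (nodeX L J (i+1)) (nodeX L J (i+1+1)) :=
      notmem_right hL hJ hx (by omega)
    simp only [psiF, if_neg hne1, if_neg hiJ, if_pos m1, if_neg m2, if_neg m3]
    rw [show i+1-2 = i-1 by omega]
    ring

lemma psi_far (hL : 0 < L) (hJ : 1 ≤ J) {j : ℕ} (h1 : 1 ≤ i) (h2 : i ≤ J)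
    (hj1 : 1 ≤ j) (hj2 : j ≤ J) (hfar : j + 1 < i ∨ i + 1 < j)
    (hx : x ∈ Ioc (nodeX L J (i-1)) (nodeX L J i)) :
    psiF L J j x = 0 := by
  by_cases hj1' : j = 1
  · have m1 : x ∉ Icc (nodeX L J 0) (nodeX L J 1) := notmem_Icc01 hL hJ hx (by omega)
    have m2 : x ∉ Ioc (nodeX L J 1) (nodeX L J 2) := notmem_left hL hJ hx (by omega)
    simp only [psiF, if_pos hj1', if_neg m1, if_neg m2]
    norm_num
  · by_cases hjJ : j = J
    · have hiJ : i + 1 < J := by omega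
      have m1 : x ∉ Ioc (nodeX L J (J-2)) (nodeX L J (J-1)) :=
        notmem_right hL hJ hx (by omega)
      have m2 : x ∉ Ioc (nodeX L J (J-1)) (nodeX L J J) :=
        notmem_right hL hJ hx (by omega)
      simp only [psiF, if_neg hj1', if_pos hjJ, if_neg m1, if_neg m2]
      norm_num
    · have m123 : x ∉ Ioc (nodeX L J (j-2)) (nodeX L J (j-1)) ∧
          x ∉ Ioc (nodeX L J (j-1)) (nodeX L J j) ∧
          x ∉ Ioc (nodeX L J j) (nodeX L J (j+1)) := by
        rcases hfar with hf | hf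
        · exact ⟨notmem_left hL hJ hx (by omega), notmem_left hL hJ hx (by omega),
            notmem_left hL hJ hx (by omega)⟩
        · exact ⟨notmem_right hL hJ hx (by omega), notmem_right hL hJ hx (by omega),
            notmem_right hL hJ hx (by omega)⟩
      simp only [psiF, if_neg hj1', if_neg hjJ, if_neg m123.1, if_neg m123.2.1,
        if_neg m123.2.2]
      norm_num

end Part3

section Part4

open Real

def Pf (L : ℝ) (k J : ℕ) (x : ℝ) : ℝ := ∑ j ∈ Finset.Icc 1 J, Sv L k J j * phiF L J j x
def Qf (L : ℝ) (k J : ℕ) (x : ℝ) : ℝ := ∑ j ∈ Finset.Icc 1 J, Sv L k J j * psiF L J j x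

variable {L : ℝ} {k J : ℕ} {i : ℕ} {x : ℝ}

lemma P_eval (hL : 0 < L) (hJ2 : 2 ≤ J) (h1 : 1 ≤ i) (h2 : i ≤ J)
    (hx : x ∈ Ioc (nodeX L J (i-1)) (nodeX L J i)) :
    Pf L k J x = -(Sv L k J (i-1) - 2 * Sv L k J i + Sv L k J (i+1)) / 2 := by
  have hJ : 1 ≤ J := by omega
  by_cases hi1 : i = 1
  · subst hi1
    have hs : Finset.Icc 1 2 ⊆ Finset.Icc 1 J := Finset.Icc_subset_Icc le_rfl hJ2
    have hz : ∀ j ∈ Finset.Icc 1 J, j ∉ Finset.Icc 1 2 → Sv L k J j * phiF L J j x = 0 := by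
      intro j hj hj'
      rw [Finset.mem_Icc] at hj
      rw [Finset.mem_Icc] at hj'
      rw [phi_far hL hJ (le_refl 1) hJ hj.1 hj.2 (by omega) hx, mul_zero]
    rw [Pf, ← Finset.sum_subset hs hz]
    rw [show Finset.Icc 1 2 = {1, 2} from rfl]
    rw [Finset.sum_insert (by decide), Finset.sum_singleton]
    rw [show (1:ℕ) - 1 = 0 from rfl, show (2:ℕ) = 1 + 1 from rfl]
    have v1 : phiF L J 1 x = 3/2 := by
      have h := phi_self hL hJ (le_refl 1) hJ hx
      rwa [if_pos (Or.inl rfl)] at h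
    rw [v1, phi_right hL hJ (le_refl 1) hJ2 hx, Sv_zero]
    ring
  · by_cases hiJ : i = J
    · have hs : Finset.Icc (i-1) i ⊆ Finset.Icc 1 J := Finset.Icc_subset_Icc (by omega) h2
      have hz : ∀ j ∈ Finset.Icc 1 J, j ∉ Finset.Icc (i-1) i → Sv L k J j * phiF L J j x = 0 := by
        intro j hj hj'
        rw [Finset.mem_Icc] at hj
        rw [Finset.mem_Icc] at hj'
        rw [phi_far hL hJ h1 h2 hj.1 hj.2 (by omega) hx, mul_zero]
      rw [Pf, ← Finset.sum_subset hs hz]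
      rw [show Finset.Icc (i-1) i = {i-1, i} from by
        ext a; rw [Finset.mem_Icc]; simp only [Finset.mem_insert, Finset.mem_singleton]; omega]
      rw [Finset.sum_insert (by simp only [Finset.mem_singleton]; omega), Finset.sum_singleton]
      have v1 : phiF L J (i-1) x = -(1:ℝ)/2 := phi_left hL hJ (by omega) h2 hx
      have v2 : phiF L J i x = 3/2 := by
        have h := phi_self hL hJ h1 h2 hx
        rwa [if_pos (Or.inr hiJ)] at h
      have st : Sv L k J (i+1) = - Sv L k J i := by
        rw [hiJ]; exact Sv_top hL hJ
      rw [v1, v2, st]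
      ring
    · have hs : Finset.Icc (i-1) (i+1) ⊆ Finset.Icc 1 J :=
        Finset.Icc_subset_Icc (by omega) (by omega)
      have hz : ∀ j ∈ Finset.Icc 1 J, j ∉ Finset.Icc (i-1) (i+1) →
          Sv L k J j * phiF L J j x = 0 := by
        intro j hj hj'
        rw [Finset.mem_Icc] at hj
        rw [Finset.mem_Icc] at hj'
        rw [phi_far hL hJ h1 h2 hj.1 hj.2 (by omega) hx, mul_zero]
      rw [Pf, ← Finset.sum_subset hs hz]
      rw [show Finset.Icc (i-1) (i+1) = {i-1, i, i+1} from by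
        ext a; rw [Finset.mem_Icc]; simp only [Finset.mem_insert, Finset.mem_singleton]; omega]
      rw [Finset.sum_insert (by simp only [Finset.mem_insert, Finset.mem_singleton]; omega),
        Finset.sum_insert (by simp only [Finset.mem_singleton]; omega), Finset.sum_singleton]
      have v1 : phiF L J (i-1) x = -(1:ℝ)/2 := phi_left hL hJ (by omega) h2 hx
      have v2 : phiF L J i x = 1 := by
        have h := phi_self hL hJ h1 h2 hx
        rwa [if_neg (by simp [hi1, hiJ])] at h
      have v3 : phiF L J (i+1) x = -(1:ℝ)/2 := phi_right hL hJ h1 (by omega) hx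
      rw [v1, v2, v3]
      ring

lemma Q_eval (hL : 0 < L) (hJ2 : 2 ≤ J) (h1 : 1 ≤ i) (h2 : i ≤ J)
    (hx : x ∈ Ioc (nodeX L J (i-1)) (nodeX L J i)) :
    Qf L k J x =
      (Sv L k J (i-1) + Sv L k J (i+1)) * (meshH L J)^2/16 + 3*(meshH L J)^2/8 * Sv L k J i
      + (meshH L J/4 * (Sv L k J (i+1) - Sv L k J (i-1)))
          * (x - (nodeX L J (i-1) + meshH L J/2))
      + ((Sv L k J (i-1) - 2 * Sv L k J i + Sv L k J (i+1))/4)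
          * (x - (nodeX L J (i-1) + meshH L J/2))^2 := by
  have hJ : 1 ≤ J := by omega
  by_cases hi1 : i = 1
  · subst hi1
    have hs : Finset.Icc 1 2 ⊆ Finset.Icc 1 J := Finset.Icc_subset_Icc le_rfl hJ2
    have hz : ∀ j ∈ Finset.Icc 1 J, j ∉ Finset.Icc 1 2 → Sv L k J j * psiF L J j x = 0 := by
      intro j hj hj'
      rw [Finset.mem_Icc] at hj
      rw [Finset.mem_Icc] at hj'
      rw [psi_far hL hJ (le_refl 1) hJ hj.1 hj.2 (by omega) hx, mul_zero]
    rw [Qf, ← Finset.sum_subset hs hz]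
    rw [show Finset.Icc 1 2 = {1, 2} from rfl]
    rw [Finset.sum_insert (by decide), Finset.sum_singleton]
    rw [show (1:ℕ) - 1 = 0 from rfl]
    have v1 : psiF L J 1 x =
        -(3:ℝ)/4 * (x - nodeX L J 0)^2 + meshH L J * (x - nodeX L J 0) := by
      have h := psi_self hL hJ (le_refl 1) hJ hx
      rwa [if_pos rfl] at h
    have v2 : psiF L J 2 x = 1/4 * (x - nodeX L J 0)^2 :=
      psi_right (i := 1) hL hJ (le_refl 1) hJ2 hx
    rw [v1, v2, Sv_zero]
    simp only [show (1:ℕ) + 1 = 2 from rfl]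
    ring
  · by_cases hiJ : i = J
    · have hs : Finset.Icc (i-1) i ⊆ Finset.Icc 1 J := Finset.Icc_subset_Icc (by omega) h2
      have hz : ∀ j ∈ Finset.Icc 1 J, j ∉ Finset.Icc (i-1) i →
          Sv L k J j * psiF L J j x = 0 := by
        intro j hj hj'
        rw [Finset.mem_Icc] at hj
        rw [Finset.mem_Icc] at hj'
        rw [psi_far hL hJ h1 h2 hj.1 hj.2 (by omega) hx, mul_zero]
      rw [Qf, ← Finset.sum_subset hs hz]
      rw [show Finset.Icc (i-1) i = {i-1, i} from by
        ext a; rw [Finset.mem_Icc]; simp only [Finset.mem_insert, Finset.mem_singleton]; omega]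
      rw [Finset.sum_insert (by simp only [Finset.mem_singleton]; omega), Finset.sum_singleton]
      have v1 : psiF L J (i-1) x = 1/4 * (nodeX L J i - x)^2 :=
        psi_left hL hJ (by omega) h2 hx
      have v2 : psiF L J i x =
          -(3:ℝ)/4 * (nodeX L J J - x)^2 + meshH L J * (nodeX L J J - x) := by
        have h := psi_self hL hJ h1 h2 hx
        rwa [if_neg hi1, if_pos hiJ] at h
      have st : Sv L k J (i+1) = - Sv L k J i := by
        rw [hiJ]; exact Sv_top hL hJ
      have eJ : nodeX L J J = nodeX L J i := by rw [hiJ]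
      have e : nodeX L J i = nodeX L J (i-1) + meshH L J := by
        have e' := nodeX_add_one (L := L) (J := J) (i-1)
        rw [show i-1+1 = i by omega] at e'
        exact e'
      rw [v1, v2, st, eJ, e]
      ring
    · have hs : Finset.Icc (i-1) (i+1) ⊆ Finset.Icc 1 J :=
        Finset.Icc_subset_Icc (by omega) (by omega)
      have hz : ∀ j ∈ Finset.Icc 1 J, j ∉ Finset.Icc (i-1) (i+1) →
          Sv L k J j * psiF L J j x = 0 := by
        intro j hj hj'
        rw [Finset.mem_Icc] at hj
        rw [Finset.mem_Icc] at hj'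
        rw [psi_far hL hJ h1 h2 hj.1 hj.2 (by omega) hx, mul_zero]
      rw [Qf, ← Finset.sum_subset hs hz]
      rw [show Finset.Icc (i-1) (i+1) = {i-1, i, i+1} from by
        ext a; rw [Finset.mem_Icc]; simp only [Finset.mem_insert, Finset.mem_singleton]; omega]
      rw [Finset.sum_insert (by simp only [Finset.mem_insert, Finset.mem_singleton]; omega),
        Finset.sum_insert (by simp only [Finset.mem_singleton]; omega), Finset.sum_singleton]
      have v1 : psiF L J (i-1) x = 1/4 * (nodeX L J i - x)^2 :=
        psi_left hL hJ (by omega) h2 hx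
      have v2 : psiF L J i x =
          -(1:ℝ)/2 * (x - nodeX L J (i-1) - meshH L J/2)^2 + 3*(meshH L J)^2/8 := by
        have h := psi_self hL hJ h1 h2 hx
        rwa [if_neg hi1, if_neg hiJ] at h
      have v3 : psiF L J (i+1) x = 1/4 * (x - nodeX L J (i-1))^2 :=
        psi_right hL hJ h1 (by omega) hx
      have e : nodeX L J i = nodeX L J (i-1) + meshH L J := by
        have e' := nodeX_add_one (L := L) (J := J) (i-1)
        rw [show i-1+1 = i by omega] at e'
        exact e'
      rw [v1, v2, v3, e]
      ring

end Part4

section Part5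

open Real MeasureTheory

variable {L : ℝ} {k J : ℕ} {i : ℕ} {x : ℝ}

lemma lam_eq : lamK L k = 2 * aa L k ^ 2 := by rw [lamK, aa]

lemma Sv_integral (hL : 0 < L) (hk : 1 ≤ k) (hJ : 1 ≤ J) {j : ℕ} (hj : 1 ≤ j) :
    ∫ y in Ioc (nodeX L J (j-1)) (nodeX L J j), Real.sin (aa L k * (y + L))
      = Sv L k J j := by
  have ha := aa_pos hL hk
  have hle : nodeX L J (j-1) ≤ nodeX L J j := nodeX_mono hL hJ (by omega)
  rw [← intervalIntegral.integral_of_le hle]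
  have F : ∀ y : ℝ, HasDerivAt (fun z => -(Real.cos (aa L k * (z + L)) / aa L k))
      (Real.sin (aa L k * (y + L))) y := by
    intro y
    have h1 : HasDerivAt (fun z : ℝ => aa L k * (z + L)) (aa L k) y := by
      simpa using ((hasDerivAt_id y).add_const L).const_mul (aa L k)
    have h2 := (Real.hasDerivAt_cos (aa L k * (y + L))).comp y h1
    have h3 := (h2.div_const (aa L k)).neg
    exact h3.congr_deriv (by rw [neg_mul, neg_div, neg_neg, mul_div_assoc, div_self ha.ne', mul_one])
  rw [intervalIntegral.integral_eq_sub_of_hasDerivAt (fun y _ => F y)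
    ((Continuous.intervalIntegrable (by continuity) _ _))]
  rw [show aa L k * (nodeX L J j + L) = aa L k * (nodeX L J j + L) from rfl]
  rw [nodeX_add_L, nodeX_add_L, cast_sub_one hj]
  rw [show aa L k * ((j:ℝ) * meshH L J) = tv L k J * j from by rw [tv]; ring,
      show aa L k * (((j:ℝ) - 1) * meshH L J) = tv L k J * j - tv L k J from by rw [tv]; ring]
  rw [Sv]
  ring

lemma cell_integral (hL : 0 < L) (hk : 1 ≤ k) (hJ : 1 ≤ J) {j1 j2 : ℕ}
    (h1 : 1 ≤ j1) (h2 : 1 ≤ j2) :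
    ∫ y in cell2 L J (j1, j2), eK L k y = Sv L k J j1 * Sv L k J j2 := by
  have harg : ∀ z : ℝ, Real.pi * k * (z + L) / L = aa L k * (z + L) := by
    intro z; rw [aa]; ring
  have : ∀ y : ℝ × ℝ, eK L k y
      = (fun z => Real.sin (aa L k * (z + L))) y.1 * (fun z => Real.sin (aa L k * (z + L))) y.2 := by
    intro y; simp only [eK, harg]
  rw [show (fun y => eK L k y) = fun y : ℝ × ℝ =>
    (fun z => Real.sin (aa L k * (z + L))) y.1 * (fun z => Real.sin (aa L k * (z + L))) y.2
    from funext this]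
  rw [cell2, Measure.volume_eq_prod, ← Measure.prod_restrict]
  have hmm := MeasureTheory.integral_prod_mul
    (μ := volume.restrict (Ioc (nodeX L J (j1-1)) (nodeX L J j1)))
    (ν := volume.restrict (Ioc (nodeX L J (j2-1)) (nodeX L J j2)))
    (fun z => Real.sin (aa L k * (z + L))) (fun z => Real.sin (aa L k * (z + L)))
  rw [Sv_integral hL hk hJ h1, Sv_integral hL hk hJ h2] at hmm
  exact hmm

def Kc (L : ℝ) (k J : ℕ) : ℝ :=
  8 / (3 * (meshH L J)^2) * (lamK L k)⁻¹ * ((meshH L J)^2)⁻¹ * (3 / (2 * (meshH L J)^2))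

lemma Kc_eq (hL : 0 < L) (hk : 1 ≤ k) (hJ : 1 ≤ J) :
    Kc L k J = 2 / (aa L k ^ 2 * meshH L J ^ 6) := by
  have ha := (aa_pos hL hk).ne'
  have hh := (mesh_pos hL hJ).ne'
  rw [Kc, lam_eq]
  field_simp
  ring

lemma sum_fact {s : Finset ℕ} {C B D : ℝ} {a c : ℕ → ℝ} :
    ∑ j ∈ s, C * (a j * B + c j * D) = C * ((∑ j ∈ s, a j) * B + (∑ j ∈ s, c j) * D) := by
  rw [Finset.sum_mul, Finset.sum_mul, ← Finset.sum_add_distrib, Finset.mul_sum]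

lemma sum_fact2 {s : Finset ℕ} {C A B : ℝ} {g h : ℕ → ℝ} :
    ∑ j ∈ s, C * (A * g j + B * h j) = C * (A * (∑ j ∈ s, g j) + B * (∑ j ∈ s, h j)) := by
  rw [Finset.mul_sum, Finset.mul_sum, ← Finset.sum_add_distrib, Finset.mul_sum]

lemma rhek_eq (hL : 0 < L) (hk : 1 ≤ k) (hJ : 1 ≤ J) (x : ℝ × ℝ) :
    RhEk L J k x = Kc L k J *
      (Pf L k J x.1 * Qf L k J x.2 + Qf L k J x.1 * Pf L k J x.2) := by
  rw [RhEk, Finset.sum_product]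
  have inner : ∀ j1 ∈ Finset.Icc 1 J,
      (∑ j2 ∈ Finset.Icc 1 J, coefC L J k (j1, j2) * Phi2 L J (j1, j2) x)
      = Kc L k J * (Sv L k J j1 * phiF L J j1 x.1 * Qf L k J x.2
          + Sv L k J j1 * psiF L J j1 x.1 * Pf L k J x.2) := by
    intro j1 hj1
    rw [Finset.mem_Icc] at hj1
    have e1 : ∀ j2 ∈ Finset.Icc 1 J, coefC L J k (j1, j2) * Phi2 L J (j1, j2) x
        = Kc L k J * (Sv L k J j1 * phiF L J j1 x.1 * (Sv L k J j2 * psiF L J j2 x.2)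
            + Sv L k J j1 * psiF L J j1 x.1 * (Sv L k J j2 * phiF L J j2 x.2)) := by
      intro j2 hj2
      rw [Finset.mem_Icc] at hj2
      rw [coefC, Phi2, cell_integral hL hk hJ hj1.1 hj2.1, Kc]
      ring
    rw [Finset.sum_congr rfl e1]
    exact sum_fact2
  rw [Finset.sum_congr rfl inner]
  exact sum_fact

end Part5

section Part6

open Real

variable {L : ℝ} {k J : ℕ} {i : ℕ} {x y : ℝ}

lemma P_bound (hL : 0 < L) (hk : 1 ≤ k) (hJ2 : 2 ≤ J) (h1 : 1 ≤ i) (h2 : i ≤ J)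
    (hx : x ∈ Ioc (nodeX L J (i-1)) (nodeX L J i)) :
    |Pf L k J x| ≤ aa L k ^ 2 * meshH L J ^ 3 / 2 := by
  have ha := aa_pos hL hk
  have hJ : 1 ≤ J := by omega
  rw [P_eval hL hJ2 h1 h2 hx]
  rw [abs_div, abs_neg, abs_of_nonneg (by norm_num : (0:ℝ) ≤ 2)]
  have hdd := Sv_dd h1 hL hk hJ
  have e : tv L k J ^ 3 / aa L k = aa L k ^ 2 * meshH L J ^ 3 := by
    rw [tv]; field_simp
  rw [e] at hdd
  linarith

lemma P_const (hL : 0 < L) (hJ2 : 2 ≤ J) (h1 : 1 ≤ i) (h2 : i ≤ J)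
    (hx : x ∈ Ioc (nodeX L J (i-1)) (nodeX L J i))
    (hy : y ∈ Ioc (nodeX L J (i-1)) (nodeX L J i)) :
    Pf L k J x = Pf L k J y := by
  rw [P_eval hL hJ2 h1 h2 hx, P_eval hL hJ2 h1 h2 hy]

lemma quad_osc {B C c h b1 c1 x y : ℝ} (hh : 0 < h)
    (hx1 : c - h/2 < x) (hx2 : x ≤ c + h/2) (hy1 : c - h/2 < y) (hy2 : y ≤ c + h/2)
    (hB : |B| ≤ b1) (hC : |C| ≤ c1) :
    |(B*(x - c) + C*(x-c)^2) - (B*(y-c) + C*(y-c)^2)| ≤ b1 * h + c1 * (h^2/4) := by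
  have hxc : |x - c| ≤ h/2 := abs_le.2 ⟨by linarith, by linarith⟩
  have hyc : |y - c| ≤ h/2 := abs_le.2 ⟨by linarith, by linarith⟩
  have hxy : |x - y| ≤ h := abs_le.2 ⟨by linarith, by linarith⟩
  have hx2' : (x - c)^2 ≤ h^2/4 := by
    have h5 : (x - c)^2 ≤ (h/2)^2 := by
      rw [← sq_abs]
      exact pow_le_pow_left₀ (abs_nonneg _) hxc 2
    nlinarith
  have hy2' : (y - c)^2 ≤ h^2/4 := by
    have h5 : (y - c)^2 ≤ (h/2)^2 := by
      rw [← sq_abs]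
      exact pow_le_pow_left₀ (abs_nonneg _) hyc 2
    nlinarith
  have hd : |(x - c)^2 - (y - c)^2| ≤ h^2/4 :=
    abs_le.2 ⟨by nlinarith [sq_nonneg (x - c)], by nlinarith [sq_nonneg (y - c)]⟩
  have e1 : (B*(x - c) + C*(x-c)^2) - (B*(y-c) + C*(y-c)^2)
      = B * (x - y) + C * ((x-c)^2 - (y-c)^2) := by ring
  rw [e1]
  calc |B * (x - y) + C * ((x-c)^2 - (y-c)^2)|
      ≤ |B * (x - y)| + |C * ((x-c)^2 - (y-c)^2)| := abs_add_le _ _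
    _ = |B| * |x - y| + |C| * |(x-c)^2 - (y-c)^2| := by rw [abs_mul, abs_mul]
    _ ≤ b1 * h + c1 * (h^2/4) := by
        have t1 : |B| * |x - y| ≤ b1 * h :=
          mul_le_mul hB hxy (abs_nonneg _) (le_trans (abs_nonneg _) hB)
        have t2 : |C| * |(x-c)^2 - (y-c)^2| ≤ c1 * (h^2/4) :=
          mul_le_mul hC hd (abs_nonneg _) (le_trans (abs_nonneg _) hC)
        linarith

lemma Q_osc (hL : 0 < L) (hk : 1 ≤ k) (hJ2 : 2 ≤ J) (h1 : 1 ≤ i) (h2 : i ≤ J)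
    (hx : x ∈ Ioc (nodeX L J (i-1)) (nodeX L J i))
    (hy : y ∈ Ioc (nodeX L J (i-1)) (nodeX L J i)) :
    |Qf L k J x - Qf L k J y|
      ≤ aa L k * meshH L J ^ 4 / 2 + aa L k ^ 2 * meshH L J ^ 5 / 16 := by
  have ha := aa_pos hL hk
  have hJ : 1 ≤ J := by omega
  have hh := mesh_pos hL hJ
  have e : nodeX L J i = nodeX L J (i-1) + meshH L J := by
    have e' := nodeX_add_one (L := L) (J := J) (i-1)
    rw [show i-1+1 = i by omega] at e'
    exact e'
  have key : Qf L k J x - Qf L k J y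
      = ((meshH L J/4 * (Sv L k J (i+1) - Sv L k J (i-1)))
            * (x - (nodeX L J (i-1) + meshH L J/2))
          + ((Sv L k J (i-1) - 2 * Sv L k J i + Sv L k J (i+1))/4)
            * (x - (nodeX L J (i-1) + meshH L J/2))^2)
        - ((meshH L J/4 * (Sv L k J (i+1) - Sv L k J (i-1)))
            * (y - (nodeX L J (i-1) + meshH L J/2))
          + ((Sv L k J (i-1) - 2 * Sv L k J i + Sv L k J (i+1))/4)
            * (y - (nodeX L J (i-1) + meshH L J/2))^2) := by
    rw [Q_eval hL hJ2 h1 h2 hx, Q_eval hL hJ2 h1 h2 hy]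
    ring
  have hB : |meshH L J/4 * (Sv L k J (i+1) - Sv L k J (i-1))| ≤ aa L k * meshH L J^3/2 := by
    rw [abs_mul, abs_of_nonneg (by linarith : (0:ℝ) ≤ meshH L J/4)]
    have hd1 := Sv_d1 h1 hL hk hJ
    have e2 : 2 * tv L k J ^ 2 / aa L k = 2 * aa L k * meshH L J^2 := by
      rw [tv]; field_simp
    rw [e2] at hd1
    have hq := mul_le_mul_of_nonneg_left hd1 (by linarith : (0:ℝ) ≤ meshH L J/4)
    calc meshH L J/4 * |Sv L k J (i+1) - Sv L k J (i-1)|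
        ≤ meshH L J/4 * (2 * aa L k * meshH L J^2) := hq
      _ = aa L k * meshH L J^3/2 := by ring
  have hC : |(Sv L k J (i-1) - 2 * Sv L k J i + Sv L k J (i+1))/4|
      ≤ aa L k ^2 * meshH L J^3/4 := by
    rw [abs_div, abs_of_nonneg (by norm_num : (0:ℝ) ≤ 4)]
    have hdd := Sv_dd h1 hL hk hJ
    have e3 : tv L k J ^ 3 / aa L k = aa L k ^ 2 * meshH L J ^ 3 := by
      rw [tv]; field_simp
    rw [e3] at hdd
    linarith
  rw [key]
  have main := quad_osc (hh := hh) (c := nodeX L J (i-1) + meshH L J/2)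
    (x := x) (y := y)
    (by linarith [hx.1]) (by have := hx.2; rw [e] at this; linarith)
    (by linarith [hy.1]) (by have := hy.2; rw [e] at this; linarith)
    hB hC
  calc _ ≤ (aa L k * meshH L J^3/2) * meshH L J
        + (aa L k ^2 * meshH L J^3/4) * (meshH L J^2/4) := main
    _ = aa L k * meshH L J ^ 4 / 2 + aa L k ^ 2 * meshH L J ^ 5 / 16 := by ring

lemma f_osc (hL : 0 < L) (hk : 1 ≤ k) (hJ2 : 2 ≤ J) {i : ℕ × ℕ}
    (hi : i ∈ Finset.Icc 1 J ×ˢ Finset.Icc 1 J) {x y : ℝ × ℝ}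
    (hx : x ∈ cell2 L J i) (hy : y ∈ cell2 L J i) :
    |RhEk L J k x - RhEk L J k y|
      ≤ aa L k * meshH L J + aa L k ^ 2 * meshH L J ^ 2 / 8 := by
  have ha := aa_pos hL hk
  have hJ : 1 ≤ J := by omega
  have hh := mesh_pos hL hJ
  rw [Finset.mem_product, Finset.mem_Icc, Finset.mem_Icc] at hi
  obtain ⟨⟨hi11, hi12⟩, hi21, hi22⟩ := hi
  rw [cell2] at hx hy
  obtain ⟨hx1, hx2⟩ := hx
  obtain ⟨hy1, hy2⟩ := hy
  set h := meshH L J with hhdef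
  have p1 : Pf L k J x.1 = Pf L k J y.1 := P_const hL hJ2 hi11 hi12 hx1 hy1
  have p2 : Pf L k J x.2 = Pf L k J y.2 := P_const hL hJ2 hi21 hi22 hx2 hy2
  have key : RhEk L J k x - RhEk L J k y
      = Kc L k J * (Pf L k J x.1 * (Qf L k J x.2 - Qf L k J y.2)
          + Pf L k J x.2 * (Qf L k J x.1 - Qf L k J y.1)) := by
    rw [rhek_eq hL hk hJ, rhek_eq hL hk hJ, ← p1, ← p2]
    ring
  have hKc : |Kc L k J| = 2 / (aa L k ^ 2 * h ^ 6) := by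
    rw [Kc_eq hL hk hJ, abs_of_pos (by positivity)]
  have bp1 : |Pf L k J x.1| ≤ aa L k ^2 * h^3/2 := P_bound hL hk hJ2 hi11 hi12 hx1
  have bp2 : |Pf L k J x.2| ≤ aa L k ^2 * h^3/2 := P_bound hL hk hJ2 hi21 hi22 hx2
  have bq2 : |Qf L k J x.2 - Qf L k J y.2| ≤ aa L k * h^4/2 + aa L k^2 * h^5/16 :=
    Q_osc hL hk hJ2 hi21 hi22 hx2 hy2
  have bq1 : |Qf L k J x.1 - Qf L k J y.1| ≤ aa L k * h^4/2 + aa L k^2 * h^5/16 :=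
    Q_osc hL hk hJ2 hi11 hi12 hx1 hy1
  have big : |RhEk L J k x - RhEk L J k y| ≤ (2 / (aa L k ^2 * h^6)) *
      ((aa L k^2*h^3/2) * (aa L k * h^4/2 + aa L k^2 * h^5/16)
        + (aa L k^2*h^3/2) * (aa L k * h^4/2 + aa L k^2 * h^5/16)) := by
    rw [key, abs_mul, hKc]
    have inner : |Pf L k J x.1 * (Qf L k J x.2 - Qf L k J y.2)
        + Pf L k J x.2 * (Qf L k J x.1 - Qf L k J y.1)|
        ≤ (aa L k^2*h^3/2) * (aa L k * h^4/2 + aa L k^2 * h^5/16)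
          + (aa L k^2*h^3/2) * (aa L k * h^4/2 + aa L k^2 * h^5/16) := by
      calc |Pf L k J x.1 * (Qf L k J x.2 - Qf L k J y.2)
          + Pf L k J x.2 * (Qf L k J x.1 - Qf L k J y.1)|
          ≤ |Pf L k J x.1| * |Qf L k J x.2 - Qf L k J y.2|
            + |Pf L k J x.2| * |Qf L k J x.1 - Qf L k J y.1| := by
            refine le_trans (abs_add_le _ _) ?_
            rw [abs_mul, abs_mul]
        _ ≤ (aa L k^2*h^3/2) * (aa L k * h^4/2 + aa L k^2 * h^5/16)
            + (aa L k^2*h^3/2) * (aa L k * h^4/2 + aa L k^2 * h^5/16) := by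
            have t1 := mul_le_mul bp1 bq2 (abs_nonneg _) (by positivity)
            have t2 := mul_le_mul bp2 bq1 (abs_nonneg _) (by positivity)
            linarith
    exact mul_le_mul_of_nonneg_left inner (by positivity)
  have final : (2 / (aa L k ^2 * h^6)) *
      ((aa L k^2*h^3/2) * (aa L k * h^4/2 + aa L k^2 * h^5/16)
        + (aa L k^2*h^3/2) * (aa L k * h^4/2 + aa L k^2 * h^5/16))
      = aa L k * h + aa L k ^ 2 * h ^ 2 / 8 := by
    field_simp
    ring
  rw [final] at big
  exact big

end Part6

section Part7

open Real MeasureTheory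

variable {L : ℝ} {k J : ℕ} {i : ℕ} {x y : ℝ}

lemma phi_abs (L : ℝ) (J i : ℕ) (x : ℝ) : |phiF L J i x| ≤ 3 := by
  simp only [phiF]
  split_ifs <;> (rw [abs_le]; constructor <;> norm_num)

lemma psi_abs (hL : 0 < L) (hJ : 1 ≤ J) {i : ℕ} (hi1 : 1 ≤ i) (hiJ : i ≤ J) (x : ℝ) :
    |psiF L J i x| ≤ 3 * meshH L J ^ 2 := by
  have hh := mesh_pos hL hJ
  by_cases e1 : i = 1
  · simp only [psiF, if_pos e1]
    have en : nodeX L J 1 = nodeX L J 0 + meshH L J := nodeX_add_one 0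
    have en2 : nodeX L J 2 = nodeX L J 1 + meshH L J := by
      rw [show (2:ℕ) = 1+1 from rfl]; exact nodeX_add_one 1
    refine le_trans (abs_add_le _ _) ?_
    have b1 : |if x ∈ Icc (nodeX L J 0) (nodeX L J 1) then
        -(3:ℝ)/4 * (x - nodeX L J 0)^2 + meshH L J * (x - nodeX L J 0) else 0|
        ≤ 2 * meshH L J ^ 2 := by
      split_ifs with hs
      · obtain ⟨hs1, hs2⟩ := hs
        rw [en] at hs2
        rw [abs_le]
        constructor <;> nlinarith [sq_nonneg (x - nodeX L J 0)]
      · rw [abs_zero]; positivity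
    have b2 : |if x ∈ Ioc (nodeX L J 1) (nodeX L J 2) then
        (1:ℝ)/4 * (x - nodeX L J 1)^2 - meshH L J / 2 * (x - nodeX L J 1)
          + (meshH L J)^2/4 else 0| ≤ meshH L J ^ 2 := by
      split_ifs with hs
      · obtain ⟨hs1, hs2⟩ := hs
        rw [en2] at hs2
        rw [abs_le]
        constructor <;> nlinarith [sq_nonneg (x - nodeX L J 1)]
      · rw [abs_zero]; positivity
    linarith
  · by_cases e2 : i = J
    · have hJ2 : 2 ≤ J := by omega
      simp only [psiF, if_neg e1, if_pos e2]
      have en : nodeX L J (J-1) = nodeX L J (J-2) + meshH L J := by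
        have e' := nodeX_add_one (L := L) (J := J) (J-2)
        rw [show J-2+1 = J-1 by omega] at e'
        exact e'
      have en2 : nodeX L J J = nodeX L J (J-1) + meshH L J := by
        have e' := nodeX_add_one (L := L) (J := J) (J-1)
        rw [show J-1+1 = J by omega] at e'
        exact e'
      refine le_trans (abs_add_le _ _) ?_
      have b1 : |if x ∈ Ioc (nodeX L J (J-2)) (nodeX L J (J-1)) then
          (1:ℝ)/4 * (nodeX L J (J-1) - x)^2 - meshH L J / 2 * (nodeX L J (J-1) - x)
            + (meshH L J)^2/4 else 0| ≤ meshH L J ^ 2 := by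
        split_ifs with hs
        · obtain ⟨hs1, hs2⟩ := hs
          rw [abs_le]
          constructor <;> nlinarith [sq_nonneg (nodeX L J (J-1) - x)]
        · rw [abs_zero]; positivity
      have b2 : |if x ∈ Ioc (nodeX L J (J-1)) (nodeX L J J) then
          -(3:ℝ)/4 * (nodeX L J J - x)^2 + meshH L J * (nodeX L J J - x) else 0|
          ≤ 2 * meshH L J ^ 2 := by
        split_ifs with hs
        · obtain ⟨hs1, hs2⟩ := hs
          rw [abs_le]
          constructor <;> nlinarith [sq_nonneg (nodeX L J J - x)]
        · rw [abs_zero]; positivity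
      linarith
    · have hi2 : 2 ≤ i := by omega
      simp only [psiF, if_neg e1, if_neg e2]
      have en : nodeX L J (i-1) = nodeX L J (i-2) + meshH L J := by
        have e' := nodeX_add_one (L := L) (J := J) (i-2)
        rw [show i-2+1 = i-1 by omega] at e'
        exact e'
      have en2 : nodeX L J i = nodeX L J (i-1) + meshH L J := by
        have e' := nodeX_add_one (L := L) (J := J) (i-1)
        rw [show i-1+1 = i by omega] at e'
        exact e'
      have en3 : nodeX L J (i+1) = nodeX L J i + meshH L J := nodeX_add_one i
      refine le_trans (abs_add_le _ _) (le_trans (add_le_add_left (abs_add_le _ _) _) ?_)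
      have b1 : |if x ∈ Ioc (nodeX L J (i-2)) (nodeX L J (i-1)) then
          (1:ℝ)/4 * (x - nodeX L J (i-2))^2 else 0| ≤ meshH L J ^ 2 := by
        split_ifs with hs
        · obtain ⟨hs1, hs2⟩ := hs
          rw [en] at hs2
          rw [abs_le]
          constructor <;> nlinarith [sq_nonneg (x - nodeX L J (i-2))]
        · rw [abs_zero]; positivity
      have b2 : |if x ∈ Ioc (nodeX L J (i-1)) (nodeX L J i) then
          -(1:ℝ)/2 * (x - nodeX L J (i-1) - meshH L J/2)^2 + 3*(meshH L J)^2/8 else 0|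
          ≤ meshH L J ^ 2 := by
        clear b1
        split_ifs with hs
        · obtain ⟨hs1, hs2⟩ := hs
          rw [en2] at hs2
          rw [abs_le]
          constructor <;> nlinarith [sq_nonneg (x - nodeX L J (i-1) - meshH L J/2)]
        · rw [abs_zero]; positivity
      have b3 : |if x ∈ Ioc (nodeX L J i) (nodeX L J (i+1)) then
          (1:ℝ)/4 * (nodeX L J (i+1) - x)^2 else 0| ≤ meshH L J ^ 2 := by
        clear b1 b2
        split_ifs with hs
        · obtain ⟨hs1, hs2⟩ := hs
          rw [en3] at hs2
          rw [en3, abs_le]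
          have hz0 : 0 ≤ nodeX L J i + meshH L J - x := by linarith
          have hzh : nodeX L J i + meshH L J - x ≤ meshH L J := by linarith
          have hsq : (nodeX L J i + meshH L J - x)^2 ≤ meshH L J ^ 2 :=
            pow_le_pow_left₀ hz0 hzh 2
          constructor
          · linarith [sq_nonneg (nodeX L J i + meshH L J - x), sq_nonneg (meshH L J)]
          · linarith [sq_nonneg (nodeX L J i + meshH L J - x)]
        · rw [abs_zero]; positivity
      linarith

lemma Pf_abs (hL : 0 < L) (hk : 1 ≤ k) (x : ℝ) :
    |Pf L k J x| ≤ (J:ℝ) * (6 / aa L k) := by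
  have ha := aa_pos hL hk
  calc |Pf L k J x| ≤ ∑ j ∈ Finset.Icc 1 J, |Sv L k J j * phiF L J j x| :=
        Finset.abs_sum_le_sum_abs _ _
    _ ≤ ∑ _j ∈ Finset.Icc 1 J, (2 / aa L k * 3) := by
        apply Finset.sum_le_sum
        intro j _
        rw [abs_mul]
        exact mul_le_mul (Sv_abs hL hk j) (phi_abs L J j x) (abs_nonneg _) (by positivity)
    _ = ((Finset.Icc 1 J).card : ℝ) * (2 / aa L k * 3) := by
        rw [Finset.sum_const, nsmul_eq_mul]
    _ ≤ (J:ℝ) * (6 / aa L k) := by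
        rw [Nat.card_Icc]
        simp only [Nat.add_sub_cancel]
        apply le_of_eq
        ring

lemma Qf_abs (hL : 0 < L) (hk : 1 ≤ k) (hJ : 1 ≤ J) (x : ℝ) :
    |Qf L k J x| ≤ (J:ℝ) * (6 * meshH L J ^ 2 / aa L k) := by
  have ha := aa_pos hL hk
  have hh := mesh_pos hL hJ
  calc |Qf L k J x| ≤ ∑ j ∈ Finset.Icc 1 J, |Sv L k J j * psiF L J j x| :=
        Finset.abs_sum_le_sum_abs _ _
    _ ≤ ∑ _j ∈ Finset.Icc 1 J, (2 / aa L k * (3 * meshH L J ^ 2)) := by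
        apply Finset.sum_le_sum
        intro j hj
        rw [Finset.mem_Icc] at hj
        rw [abs_mul]
        exact mul_le_mul (Sv_abs hL hk j) (psi_abs hL hJ hj.1 hj.2 x) (abs_nonneg _)
          (by positivity)
    _ = ((Finset.Icc 1 J).card : ℝ) * (2 / aa L k * (3 * meshH L J ^ 2)) := by
        rw [Finset.sum_const, nsmul_eq_mul]
    _ ≤ (J:ℝ) * (6 * meshH L J ^ 2 / aa L k) := by
        rw [Nat.card_Icc]
        simp only [Nat.add_sub_cancel]
        apply le_of_eq
        ring

def Mf (L : ℝ) (k J : ℕ) : ℝ :=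
  2 / (aa L k ^ 2 * meshH L J ^ 6)
    * (2 * (((J:ℝ) * (6 / aa L k)) * ((J:ℝ) * (6 * meshH L J ^ 2 / aa L k))))

lemma Mf_nonneg (hL : 0 < L) (hk : 1 ≤ k) (hJ : 1 ≤ J) : 0 ≤ Mf L k J := by
  have ha := aa_pos hL hk
  have hh := mesh_pos hL hJ
  have hJ' : (0:ℝ) ≤ (J:ℝ) := Nat.cast_nonneg J
  rw [Mf]
  positivity

lemma f_abs (hL : 0 < L) (hk : 1 ≤ k) (hJ : 1 ≤ J) (x : ℝ × ℝ) :
    |RhEk L J k x| ≤ Mf L k J := by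
  have ha := aa_pos hL hk
  have hh := mesh_pos hL hJ
  rw [rhek_eq hL hk hJ, Mf, abs_mul]
  have hKc : |Kc L k J| = 2 / (aa L k ^ 2 * meshH L J ^ 6) := by
    rw [Kc_eq hL hk hJ, abs_of_pos (by positivity)]
  rw [hKc]
  apply mul_le_mul_of_nonneg_left _ (by positivity)
  calc |Pf L k J x.1 * Qf L k J x.2 + Qf L k J x.1 * Pf L k J x.2|
      ≤ |Pf L k J x.1| * |Qf L k J x.2| + |Qf L k J x.1| * |Pf L k J x.2| := by
        refine le_trans (abs_add_le _ _) ?_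
        rw [abs_mul, abs_mul]
    _ ≤ ((J:ℝ) * (6 / aa L k)) * ((J:ℝ) * (6 * meshH L J ^ 2 / aa L k))
        + ((J:ℝ) * (6 * meshH L J ^ 2 / aa L k)) * ((J:ℝ) * (6 / aa L k)) := by
        have t1 := mul_le_mul (Pf_abs (J := J) hL hk x.1) (Qf_abs hL hk hJ x.2)
          (abs_nonneg _) (by positivity)
        have t2 := mul_le_mul (Qf_abs hL hk hJ x.1) (Pf_abs (J := J) hL hk x.2)
          (abs_nonneg _) (by positivity)
        linarith
    _ = 2 * (((J:ℝ) * (6 / aa L k)) * ((J:ℝ) * (6 * meshH L J ^ 2 / aa L k))) := by ring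

lemma meas_piece {s : Set ℝ} [DecidablePred (· ∈ s)] (hs : MeasurableSet s)
    {f : ℝ → ℝ} (hf : Measurable f) :
    Measurable (fun x => if x ∈ s then f x else 0) := by
  have he : (fun x => if x ∈ s then f x else 0) = s.indicator f := by
    funext x
    rw [Set.indicator_apply]
  rw [he]
  exact hf.indicator hs

lemma phi_meas (L : ℝ) (J i : ℕ) : Measurable (phiF L J i) := by
  unfold phiF
  by_cases h1 : i = 1
  · simp only [if_pos h1]
    exact (meas_piece measurableSet_Icc measurable_const).add
      (meas_piece measurableSet_Ioc measurable_const)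
  · by_cases h2 : i = J
    · simp only [if_neg h1, if_pos h2]
      exact (meas_piece measurableSet_Ioc measurable_const).add
        (meas_piece measurableSet_Ioc measurable_const)
    · simp only [if_neg h1, if_neg h2]
      exact ((meas_piece measurableSet_Ioc measurable_const).add
        (meas_piece measurableSet_Ioc measurable_const)).add
        (meas_piece measurableSet_Ioc measurable_const)

lemma psi_meas (L : ℝ) (J i : ℕ) : Measurable (psiF L J i) := by
  unfold psiF
  by_cases h1 : i = 1
  · simp only [if_pos h1]
    apply Measurable.add
    · exact meas_piece measurableSet_Icc (by fun_prop)
    · exact meas_piece measurableSet_Ioc (by fun_prop)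
  · by_cases h2 : i = J
    · simp only [if_neg h1, if_pos h2]
      apply Measurable.add
      · exact meas_piece measurableSet_Ioc (by fun_prop)
      · exact meas_piece measurableSet_Ioc (by fun_prop)
    · simp only [if_neg h1, if_neg h2]
      apply Measurable.add
      apply Measurable.add
      · exact meas_piece measurableSet_Ioc (by fun_prop)
      · exact meas_piece measurableSet_Ioc (by fun_prop)
      · exact meas_piece measurableSet_Ioc (by fun_prop)

lemma rhek_meas (L : ℝ) (J k : ℕ) : Measurable (RhEk L J k) := by
  unfold RhEk
  apply Finset.measurable_sum
  intro j _
  apply Measurable.const_mul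
  unfold Phi2
  apply Measurable.const_mul
  exact (((phi_meas L J j.1).comp measurable_fst).mul
      ((psi_meas L J j.2).comp measurable_snd)).add
    (((psi_meas L J j.1).comp measurable_fst).mul
      ((phi_meas L J j.2).comp measurable_snd))

lemma cell_unique (hL : 0 < L) (hJ : 1 ≤ J) {i j : ℕ} (hi : 1 ≤ i) (hj : 1 ≤ j)
    (hx : x ∈ Ioc (nodeX L J (i-1)) (nodeX L J i))
    (hx' : x ∈ Ioc (nodeX L J (j-1)) (nodeX L J j)) : i = j := by
  by_contra hne
  rcases Nat.lt_or_ge i j with hlt | hge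
  · have hmono : nodeX L J i ≤ nodeX L J (j-1) := nodeX_mono hL hJ (by omega)
    linarith [hx.2, hx'.1]
  · have hmono : nodeX L J j ≤ nodeX L J (i-1) := nodeX_mono hL hJ (by omega)
    linarith [hx'.2, hx.1]

lemma exists_cell (hL : 0 < L) (hJ : 1 ≤ J) {y : ℝ} (hy : y ∈ Ioo (-L) L) :
    ∃ i, 1 ≤ i ∧ i ≤ J ∧ y ∈ Ioc (nodeX L J (i-1)) (nodeX L J i) := by
  have hh := mesh_pos hL hJ
  have hJh : (J:ℝ) * meshH L J = 2 * L := by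
    have hJ0 : (J:ℝ) ≠ 0 := by positivity
    simp only [meshH]
    field_simp
  set r := (y + L) / meshH L J with hr
  have hrh : r * meshH L J = y + L := by
    rw [hr]; field_simp
  have hr0 : 0 < r := div_pos (by linarith [hy.1]) hh
  have hrJ : r ≤ (J:ℝ) := by
    rw [hr, div_le_iff₀ hh]
    have := hy.2
    linarith [hJh]
  have h1c : 1 ≤ ⌈r⌉₊ := by
    have := Nat.ceil_pos.2 hr0
    omega
  refine ⟨⌈r⌉₊, h1c, Nat.ceil_le.2 hrJ, ?_, ?_⟩
  · rw [nodeX, cast_sub_one h1c]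
    have hc1 : (⌈r⌉₊ : ℝ) < r + 1 := Nat.ceil_lt_add_one (le_of_lt hr0)
    nlinarith
  · rw [nodeX]
    have hc2 : r ≤ (⌈r⌉₊ : ℝ) := Nat.le_ceil r
    nlinarith

lemma cell2_measurable (L : ℝ) (J : ℕ) (i : ℕ × ℕ) : MeasurableSet (cell2 L J i) :=
  measurableSet_Ioc.prod measurableSet_Ioc

lemma rbar_bound (hL : 0 < L) (hk : 1 ≤ k) (hJ : 1 ≤ J) {D : ℝ} (hD : 0 ≤ D)
    (hosc : ∀ i ∈ Finset.Icc 1 J ×ˢ Finset.Icc 1 J, ∀ x ∈ cell2 L J i, ∀ y ∈ cell2 L J i,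
      |RhEk L J k x - RhEk L J k y| ≤ D) :
    ∀ x ∈ sq2 L, |Rbar2 L J (RhEk L J k) x - RhEk L J k x| ≤ D := by
  intro x hx
  have ha := aa_pos hL hk
  have hh := mesh_pos hL hJ
  rw [sq2] at hx
  obtain ⟨i1, hi11, hi12, hm1⟩ := exists_cell hL hJ hx.1
  obtain ⟨i2, hi21, hi22, hm2⟩ := exists_cell hL hJ hx.2
  have hmem : (i1, i2) ∈ Finset.Icc 1 J ×ˢ Finset.Icc 1 J := by
    rw [Finset.mem_product, Finset.mem_Icc, Finset.mem_Icc]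
    exact ⟨⟨hi11, hi12⟩, hi21, hi22⟩
  have hcell : x ∈ cell2 L J (i1, i2) := ⟨hm1, hm2⟩
  have hvol : volume (cell2 L J (i1, i2))
      = ENNReal.ofReal (meshH L J) * ENNReal.ofReal (meshH L J) := by
    rw [cell2, Measure.volume_eq_prod, Measure.prod_prod, Real.volume_Ioc, Real.volume_Ioc]
    have e1 : nodeX L J i1 - nodeX L J (i1 - 1) = meshH L J := by
      rw [nodeX_sub_one hi11]; ring
    have e2 : nodeX L J i2 - nodeX L J (i2 - 1) = meshH L J := by
      rw [nodeX_sub_one hi21]; ring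
    rw [e1, e2]
  have hvolr : (volume (cell2 L J (i1, i2))).toReal = meshH L J * meshH L J := by
    rw [hvol, ENNReal.toReal_mul, ENNReal.toReal_ofReal (le_of_lt hh)]
  have hvollt : volume (cell2 L J (i1, i2)) < ⊤ := by
    rw [hvol]
    exact ENNReal.mul_lt_top ENNReal.ofReal_lt_top ENNReal.ofReal_lt_top
  haveI hfin : IsFiniteMeasure (volume.restrict (cell2 L J (i1, i2))) := by
    constructor
    rw [Measure.restrict_apply_univ]
    exact hvollt
  have hint : IntegrableOn (RhEk L J k) (cell2 L J (i1, i2)) volume := by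
    apply Integrable.mono' (g := fun _ => Mf L k J)
      (integrableOn_const hvollt.ne)
      ((rhek_meas L J k).aestronglyMeasurable)
    exact Filter.Eventually.of_forall (fun y => by
      rw [Real.norm_eq_abs]; exact f_abs hL hk hJ y)
  have hsum : Rbar2 L J (RhEk L J k) x
      = ((meshH L J)^2)⁻¹ * ∫ y in cell2 L J (i1, i2), RhEk L J k y := by
    rw [Rbar2]
    rw [Finset.sum_eq_single_of_mem (i1, i2) hmem ?_]
    · exact Set.indicator_of_mem hcell _
    · intro b hb hne
      apply Set.indicator_of_notMem
      intro hbx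
      apply hne
      rw [Finset.mem_product, Finset.mem_Icc, Finset.mem_Icc] at hb
      have e1 : b.1 = i1 := cell_unique hL hJ hb.1.1 hi11 hbx.1 hm1
      have e2 : b.2 = i2 := cell_unique hL hJ hb.2.1 hi21 hbx.2 hm2
      rw [Prod.ext_iff]
      exact ⟨e1, e2⟩
  have hconstint : IntegrableOn (fun _ : ℝ × ℝ => RhEk L J k x) (cell2 L J (i1, i2)) volume :=
    integrableOn_const hvollt.ne
  have hsplit : ∫ y in cell2 L J (i1, i2), (RhEk L J k y - RhEk L J k x)
      = (∫ y in cell2 L J (i1, i2), RhEk L J k y)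
        - (meshH L J * meshH L J) * RhEk L J k x := by
    rw [integral_sub hint hconstint, setIntegral_const, measureReal_def, hvolr, smul_eq_mul]
  have hdiff : |∫ y in cell2 L J (i1, i2), (RhEk L J k y - RhEk L J k x)|
      ≤ D * (meshH L J * meshH L J) := by
    have hb : ∀ᵐ y ∂(volume.restrict (cell2 L J (i1, i2))),
        ‖RhEk L J k y - RhEk L J k x‖ ≤ D := by
      rw [ae_restrict_iff' (cell2_measurable L J (i1, i2))]
      exact Filter.Eventually.of_forall (fun y hy => by
        rw [Real.norm_eq_abs]; exact hosc (i1, i2) hmem y hy x hcell)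
    have hni := norm_integral_le_of_norm_le_const hb
    rw [measureReal_def, Measure.restrict_apply_univ, hvolr] at hni
    rwa [Real.norm_eq_abs] at hni
  rw [hsum]
  have key : ((meshH L J)^2)⁻¹ * (∫ y in cell2 L J (i1, i2), RhEk L J k y) - RhEk L J k x
      = ((meshH L J)^2)⁻¹ * ∫ y in cell2 L J (i1, i2), (RhEk L J k y - RhEk L J k x) := by
    rw [hsplit, mul_sub]
    have e9 : (meshH L J ^ 2)⁻¹ * (meshH L J * meshH L J * RhEk L J k x)
        = (meshH L J ^ 2 * (meshH L J ^ 2)⁻¹) * RhEk L J k x := by ring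
    rw [e9, mul_inv_cancel₀ (by positivity : (meshH L J ^ 2) ≠ 0), one_mul]
  rw [key, abs_mul, abs_inv, abs_of_pos (by positivity : (0:ℝ) < meshH L J ^ 2)]
  calc (meshH L J ^ 2)⁻¹ * |∫ y in cell2 L J (i1, i2), (RhEk L J k y - RhEk L J k x)|
      ≤ (meshH L J ^ 2)⁻¹ * (D * (meshH L J * meshH L J)) :=
        mul_le_mul_of_nonneg_left hdiff (by positivity)
    _ = D * (meshH L J ^ 2 * (meshH L J ^ 2)⁻¹) := by ring
    _ = D := by rw [mul_inv_cancel₀ (by positivity : (meshH L J ^ 2) ≠ 0), mul_one]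

end Part7

section Part8

open Real MeasureTheory

variable {L : ℝ} {k J : ℕ}

lemma elp_bound (hL : 0 < L) {p : ℝ} (hp : 1 ≤ p) (g : ℝ × ℝ → ℝ) {D : ℝ} (hD : 0 ≤ D)
    (hg : ∀ x ∈ sq2 L, |g x| ≤ D) :
    eLpNorm g (ENNReal.ofReal p) (volume.restrict (sq2 L))
      ≤ ENNReal.ofReal ((max 1 (4*L^2)) * D) := by
  have hmeas : MeasurableSet (sq2 L) := measurableSet_Ioo.prod measurableSet_Ioo
  have hae : ∀ᵐ x ∂(volume.restrict (sq2 L)), ‖g x‖ ≤ D := by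
    rw [ae_restrict_iff' hmeas]
    exact Filter.Eventually.of_forall fun x hx => by rw [Real.norm_eq_abs]; exact hg x hx
  have h1 := eLpNorm_le_of_ae_bound (p := ENNReal.ofReal p) hae
  refine le_trans h1 ?_
  have hvol : (volume.restrict (sq2 L)) Set.univ
      = ENNReal.ofReal (2*L) * ENNReal.ofReal (2*L) := by
    rw [Measure.restrict_apply_univ, sq2, Measure.volume_eq_prod, Measure.prod_prod,
      Real.volume_Ioo, show L - -L = 2*L from by ring]
  have hexp : (ENNReal.ofReal p).toReal⁻¹ = p⁻¹ := by
    rw [ENNReal.toReal_ofReal (by linarith)]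
  rw [hvol, hexp]
  have hbase : ENNReal.ofReal (2*L) * ENNReal.ofReal (2*L) = ENNReal.ofReal (4*L^2) := by
    rw [← ENNReal.ofReal_mul (by linarith)]
    congr 1
    ring
  rw [hbase]
  have hpinv : (0:ℝ) ≤ p⁻¹ := by positivity
  have hpow : ENNReal.ofReal (4*L^2) ^ (p⁻¹ : ℝ) ≤ ENNReal.ofReal (max 1 (4*L^2)) := by
    rcases le_total (4*L^2) 1 with hle | hge
    · calc ENNReal.ofReal (4*L^2) ^ (p⁻¹ : ℝ) ≤ 1 :=
            ENNReal.rpow_le_one (ENNReal.ofReal_le_one.2 hle) hpinv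
        _ ≤ ENNReal.ofReal (max 1 (4*L^2)) := by
            rw [show (1:ENNReal) = ENNReal.ofReal 1 from ENNReal.ofReal_one.symm]
            exact ENNReal.ofReal_le_ofReal (le_max_left _ _)
    · have h1b : 1 ≤ ENNReal.ofReal (4*L^2) := ENNReal.one_le_ofReal.2 hge
      have hple : p⁻¹ ≤ (1:ℝ) := by
        have hp0 : (0:ℝ) < p := by linarith
        rw [inv_le_one_iff₀]
        right; exact hp
      calc ENNReal.ofReal (4*L^2) ^ (p⁻¹ : ℝ)
          ≤ ENNReal.ofReal (4*L^2) ^ (1:ℝ) :=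
            ENNReal.rpow_le_rpow_of_exponent_le h1b hple
        _ = ENNReal.ofReal (4*L^2) := ENNReal.rpow_one _
        _ ≤ ENNReal.ofReal (max 1 (4*L^2)) := ENNReal.ofReal_le_ofReal (le_max_right _ _)
  calc ENNReal.ofReal (4*L^2) ^ (p⁻¹ : ℝ) * ENNReal.ofReal D
      ≤ ENNReal.ofReal (max 1 (4*L^2)) * ENNReal.ofReal D := mul_le_mul_left hpow _
    _ = ENNReal.ofReal ((max 1 (4*L^2)) * D) :=
        (ENNReal.ofReal_mul (le_trans zero_le_one (le_max_left _ _))).symm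

end Part8

end S16

/-- Estimate (5.15): for fixed `k ≥ 1`, `p ≥ 1` there is a constant `C = C(k,p,L)`
with `‖R̄_h(R_h e_k) − R_h e_k‖_{L^p((−L,L)²)} ≤ C h` for all `m` (`J = 2^m`, `h = 2L/J`). -/
theorem stmt16 (L : ℝ) (hL : 0 < L) (k : ℕ) (hk : 1 ≤ k) (p : ℝ) (hp : 1 ≤ p) :
    ∃ C : ℝ, ∀ m : ℕ,
      eLpNorm
        (fun x => Rbar2 L (2 ^ m) (RhEk L (2 ^ m) k) x - RhEk L (2 ^ m) k x)
        (ENNReal.ofReal p) (volume.restrict (sq2 L))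
      ≤ ENNReal.ofReal (C * meshH L (2 ^ m)) := by
  have ha := S16.aa_pos hL hk
  refine ⟨max ((max 1 (4*L^2)) * (S16.aa L k + S16.aa L k^2 * L / 4))
    ((max 1 (4*L^2)) * (2 * S16.Mf L k 1) / (2*L)), fun m => ?_⟩
  have hJ1 : 1 ≤ 2^m := Nat.one_le_two_pow
  have hh := S16.mesh_pos hL hJ1
  have hhle := S16.mesh_le hL hJ1
  have hmaxpos : (0:ℝ) ≤ max 1 (4*L^2) := le_trans zero_le_one (le_max_left _ _)
  by_cases hm : m = 0
  · subst hm
    simp only [pow_zero]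
    have hMf := S16.Mf_nonneg (L := L) (k := k) (J := 1) hL hk le_rfl
    have hosc : ∀ i ∈ Finset.Icc 1 1 ×ˢ Finset.Icc 1 1, ∀ x ∈ cell2 L 1 i,
        ∀ y ∈ cell2 L 1 i, |RhEk L 1 k x - RhEk L 1 k y| ≤ 2 * S16.Mf L k 1 := by
      intro i _ x _ y _
      calc |RhEk L 1 k x - RhEk L 1 k y| ≤ |RhEk L 1 k x| + |RhEk L 1 k y| := abs_sub _ _
        _ ≤ S16.Mf L k 1 + S16.Mf L k 1 :=
            add_le_add (S16.f_abs hL hk le_rfl x) (S16.f_abs hL hk le_rfl y)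
        _ = 2 * S16.Mf L k 1 := by ring
    have hb := S16.rbar_bound hL hk le_rfl (by linarith) hosc
    refine le_trans (S16.elp_bound hL hp _ (by linarith) hb) ?_
    apply ENNReal.ofReal_le_ofReal
    have hmesh1 : meshH L 1 = 2*L := by rw [meshH]; norm_num
    rw [hmesh1]
    have hC2 : (max 1 (4*L^2)) * (2 * S16.Mf L k 1) / (2*L)
        ≤ max ((max 1 (4*L^2)) * (S16.aa L k + S16.aa L k^2 * L / 4))
          ((max 1 (4*L^2)) * (2 * S16.Mf L k 1) / (2*L)) := le_max_right _ _
    calc (max 1 (4*L^2)) * (2 * S16.Mf L k 1)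
        = ((max 1 (4*L^2)) * (2 * S16.Mf L k 1) / (2*L)) * (2*L) := by
          field_simp
      _ ≤ _ * (2*L) := mul_le_mul_of_nonneg_right hC2 (by linarith)
  · have hJ2 : 2 ≤ 2^m := by
      have := Nat.one_lt_two_pow_iff.2 hm
      omega
    have hDnn : (0:ℝ) ≤ S16.aa L k * meshH L (2^m) + S16.aa L k^2 * meshH L (2^m)^2/8 := by
      positivity
    have hosc : ∀ i ∈ Finset.Icc 1 (2^m) ×ˢ Finset.Icc 1 (2^m), ∀ x ∈ cell2 L (2^m) i,
        ∀ y ∈ cell2 L (2^m) i, |RhEk L (2^m) k x - RhEk L (2^m) k y|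
          ≤ S16.aa L k * meshH L (2^m) + S16.aa L k^2 * meshH L (2^m)^2/8 :=
      fun i hi x hx y hy => S16.f_osc hL hk hJ2 hi hx hy
    have hb := S16.rbar_bound hL hk hJ1 hDnn hosc
    refine le_trans (S16.elp_bound hL hp _ hDnn hb) ?_
    apply ENNReal.ofReal_le_ofReal
    have hstep : S16.aa L k * meshH L (2^m) + S16.aa L k^2 * meshH L (2^m)^2/8
        ≤ (S16.aa L k + S16.aa L k^2 * L/4) * meshH L (2^m) := by
      nlinarith [mul_nonneg (mul_nonneg (sq_nonneg (S16.aa L k)) (le_of_lt hh))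
        (sub_nonneg.2 hhle)]
    calc (max 1 (4*L^2)) * (S16.aa L k * meshH L (2^m) + S16.aa L k^2 * meshH L (2^m)^2/8)
        ≤ (max 1 (4*L^2)) * ((S16.aa L k + S16.aa L k^2 * L/4) * meshH L (2^m)) :=
          mul_le_mul_of_nonneg_left hstep hmaxpos
      _ = ((max 1 (4*L^2)) * (S16.aa L k + S16.aa L k^2 * L/4)) * meshH L (2^m) := by ring
      _ ≤ _ * meshH L (2^m) := mul_le_mul_of_nonneg_right (le_max_left _ _) (le_of_lt hh)

end
end
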